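/- arXiv:math/0008241 — 7 statements merged into one kernel-verified Lean document; each statement's English description precedes it below -/
import Mathlib

section
/- Let l₁, l₂ ∈ ℝ² be linearly independent vectors, and let γ₁, γ₂ : ℝ → ℝ² be continuous curves satisfying the periodicity relations γ₁(t + 1) = γ₁(t) + l₁ and γ₂(t + 1) = γ₂(t) + l₂ for all t ∈ ℝ. Then for every vector z ∈ ℝ² (in particular for every z ∈ ℤ²) the translate of the image of γ₁ by z intersects the image of γ₂; that is, there exist s, t ∈ ℝ with γ₁(s) + z = γ₂(t). -/
open Complex Finset

lemma exp_arg_mul_I {z : ℂ} (hz : z ≠ 0) :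
    Complex.exp ((z.arg : ℂ) * Complex.I) = z / (‖z‖ : ℂ) := by
  have h := Complex.norm_mul_exp_arg_mul_I z
  have habs : (‖z‖ : ℂ) ≠ 0 := by
    exact_mod_cast (norm_ne_zero_iff.mpr hz)
  field_simp
  rw [mul_comm]
  exact h

lemma div_abs_step {A B : ℂ} (hA : A ≠ 0) (hB : B ≠ 0) :
    A / (‖A‖ : ℂ) * (B / A / ((‖B‖ : ℂ) / (‖A‖ : ℂ)))
      = B / (‖B‖ : ℂ) := by
  have a1 : (‖A‖ : ℂ) ≠ 0 := by exact_mod_cast norm_ne_zero_iff.mpr hA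
  have a2 : (‖B‖ : ℂ) ≠ 0 := by exact_mod_cast norm_ne_zero_iff.mpr hB
  field_simp

lemma core_zero (h : ℂ → ℂ) (hc : Continuous h)
    (h1 : ∀ w, h (w + 1) = h w - 1) (hI : ∀ w, h (w + Complex.I) = h w + Complex.I) :
    ∃ w, h w = 0 := by
  by_contra hne
  push_neg at hne
  set p : ℂ → ℂ := fun w => h w + (starRingEnd ℂ) w with hp
  have hpc : Continuous p := hc.add Complex.continuous_conj
  have per1 : Function.Periodic p 1 := by
    intro w
    simp only [hp, h1, map_add, map_one]
    ring
  have perI : Function.Periodic p Complex.I := by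
    intro w
    simp only [hp, hI, map_add, Complex.conj_I]
    ring
  obtain ⟨C, hC⟩ := (isCompact_closedBall (0:ℂ) 2).exists_bound_of_continuousOn hpc.continuousOn
  have hCp : ∀ w, ‖p w‖ ≤ C := by
    intro w
    obtain ⟨m, k, w₀, hw₀⟩ : ∃ (m k : ℤ) (w₀ : ℂ), w₀ = w - (⌊w.re⌋ : ℤ) - (⌊w.im⌋ : ℤ) * Complex.I ∧ m = ⌊w.re⌋ ∧ k = ⌊w.im⌋ :=
      ⟨⌊w.re⌋, ⌊w.im⌋, _, rfl, rfl, rfl⟩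
    obtain ⟨hw₀, hm, hk⟩ := hw₀
    have e1 : w = w₀ + (m:ℂ) * 1 + (k:ℂ) * Complex.I := by rw [hw₀, hm, hk]; ring
    have hpw : p w = p w₀ := by
      rw [e1, (perI.int_mul k) (w₀ + (m:ℂ) * 1), (per1.int_mul m) w₀]
    have hre : w₀.re = Int.fract w.re := by
      rw [hw₀, Int.fract]
      simp
    have him : w₀.im = Int.fract w.im := by
      rw [hw₀, Int.fract]
      simp
    have hw₀mem : w₀ ∈ Metric.closedBall (0:ℂ) 2 := by
      rw [Metric.mem_closedBall, dist_zero_right]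
      refine le_trans (Complex.norm_le_abs_re_add_abs_im w₀) ?_
      rw [hre, him, Int.abs_fract, Int.abs_fract]
      have := (Int.fract_lt_one w.re).le
      have := (Int.fract_lt_one w.im).le
      linarith
    calc ‖p w‖ = ‖p w₀‖ := by rw [hpw]
    _ ≤ C := hC _ hw₀mem
  have hC0 : 0 ≤ C := le_trans (norm_nonneg _) (hCp 0)
  set N : ℝ := C + 1 with hN
  have hNpos : (0:ℝ) < N := by simp only [hN]; linarith
  set K := Metric.closedBall (0:ℂ) N with hK
  have hKcomp : IsCompact K := isCompact_closedBall _ _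
  have habsK : ∀ x : ℂ, ‖x‖ ≤ N → x ∈ K := by
    intro x hx
    rw [hK, Metric.mem_closedBall, dist_zero_right]
    exact hx
  obtain ⟨x₀, hx₀K, hmin'⟩ := hKcomp.exists_isMinOn ⟨0, habsK 0 (by simpa using hNpos.le)⟩
    (continuous_norm.comp hc).continuousOn
  have hmin : ∀ y ∈ K, ‖h x₀‖ ≤ ‖h y‖ := fun y hy => hmin' hy
  set δ := ‖h x₀‖ with hδ
  have hδpos : 0 < δ := norm_pos_iff.mpr (hne x₀)
  have hu := hKcomp.uniformContinuousOn_of_continuous hc.continuousOn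
  rw [Metric.uniformContinuousOn_iff] at hu
  obtain ⟨ε, hεpos, hε⟩ := hu δ hδpos
  obtain ⟨n, hn⟩ := exists_nat_gt (N / ε)
  have hnpos : 0 < (n:ℝ) := lt_trans (div_pos hNpos hεpos) hn
  have hNn : N / n < ε := by
    rw [div_lt_iff₀ hεpos] at hn
    rw [div_lt_iff₀ hnpos]
    nlinarith
  -- the points along the segment from 0 to x
  set pt : ℕ → ℂ → ℂ := fun k x => (((k:ℝ)/(n:ℝ) : ℝ) : ℂ) * x with hptdef
  have hpt0 : ∀ x, pt 0 x = 0 := by intro x; simp [hptdef]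
  have hptn : ∀ x, pt n x = x := by
    intro x
    simp only [hptdef]
    rw [div_self (ne_of_gt hnpos)]
    simp
  have hptK : ∀ x ∈ K, ∀ k : ℕ, k ≤ n → pt k x ∈ K := by
    intro x hx k hk
    apply habsK
    simp only [hptdef, norm_mul, Complex.norm_real, Real.norm_eq_abs]
    have hxN : ‖x‖ ≤ N := by
      rw [hK, Metric.mem_closedBall, dist_zero_right] at hx
      exact hx
    have h1 : |(k:ℝ)/(n:ℝ)| ≤ 1 := by
      rw [abs_div, Nat.abs_cast, Nat.abs_cast, div_le_one hnpos]
      exact_mod_cast hk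
    calc |(k:ℝ)/(n:ℝ)| * ‖x‖ ≤ 1 * N :=
          mul_le_mul h1 hxN (norm_nonneg _) zero_le_one
    _ = N := one_mul N
  have hptdist : ∀ x ∈ K, ∀ k : ℕ, ‖pt (k+1) x - pt k x‖ < ε := by
    intro x hx k
    have hxN : ‖x‖ ≤ N := by
      rw [hK, Metric.mem_closedBall, dist_zero_right] at hx
      exact hx
    have : pt (k+1) x - pt k x = ((1/(n:ℝ) : ℝ) : ℂ) * x := by
      simp only [hptdef]
      push_cast
      ring
    rw [this, norm_mul, Complex.norm_real, Real.norm_eq_abs, _root_.abs_of_nonneg (by positivity : (0:ℝ) ≤ 1/(n:ℝ))]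
    calc 1/(n:ℝ) * ‖x‖ ≤ 1/(n:ℝ) * N := by
          apply mul_le_mul_of_nonneg_left hxN (by positivity)
    _ = N / n := by ring
    _ < ε := hNn
  -- ratio of consecutive values
  set r : ℕ → ℂ → ℂ := fun k x => h (pt (k+1) x) / h (pt k x) with hrdef
  have hrne : ∀ k x, r k x ≠ 0 := fun k x => div_ne_zero (hne _) (hne _)
  have hrslit : ∀ x ∈ K, ∀ k : ℕ, k < n → r k x ∈ Complex.slitPlane := by
    intro x hx k hk
    have hd : ‖h (pt (k+1) x) - h (pt k x)‖ < δ := by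
      have := hε _ (hptK x hx (k+1) hk) _ (hptK x hx k hk.le) (by
        rw [Complex.dist_eq]; exact hptdist x hx k)
      rwa [Complex.dist_eq] at this
    have h2 : δ ≤ ‖h (pt k x)‖ := hmin _ (hptK x hx k hk.le)
    have hlt : ‖r k x - 1‖ < 1 := by
      rw [hrdef]
      simp only
      rw [div_sub_one (hne _), norm_div]
      rw [div_lt_one (norm_pos_iff.mpr (hne _))]
      exact lt_of_lt_of_le hd h2
    apply Complex.mem_slitPlane_iff.2
    left
    have h3 := Complex.re_le_norm (1 - r k x)
    have hlt' : ‖1 - r k x‖ < 1 := by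
      rw [norm_sub_rev 1 (r k x)]
      exact hlt
    have h4 : (1 - r k x).re = 1 - (r k x).re := by simp
    linarith [lt_of_le_of_lt h3 hlt']
  -- continuous argument
  set θ : ℂ → ℝ := fun x => (h 0).arg + ∑ k ∈ Finset.range n, (r k x).arg with hθdef
  have hθexp : ∀ x : ℂ, ∀ m : ℕ,
      Complex.exp ((((h 0).arg + ∑ k ∈ Finset.range m, (r k x).arg : ℝ) : ℂ) * Complex.I)
        = h (pt m x) / (‖h (pt m x)‖ : ℂ) := by
    intro x m
    induction m with
    | zero =>
      simp only [Finset.range_zero, Finset.sum_empty, add_zero]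
      rw [exp_arg_mul_I (hne 0), hpt0]
    | succ m ih =>
      rw [Finset.sum_range_succ]
      have : ((((h 0).arg + (∑ k ∈ Finset.range m, (r k x).arg + (r m x).arg) : ℝ)) : ℂ) * Complex.I
          = (((h 0).arg + ∑ k ∈ Finset.range m, (r k x).arg : ℝ) : ℂ) * Complex.I
            + (((r m x).arg : ℝ) : ℂ) * Complex.I := by
        push_cast
        ring
      rw [this, Complex.exp_add, ih, exp_arg_mul_I (hrne m x)]
      have hrm : r m x = h (pt (m+1) x) / h (pt m x) := rfl
      have habsr : (‖r m x‖ : ℂ)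
          = (‖h (pt (m+1) x)‖ : ℂ) / (‖h (pt m x)‖ : ℂ) := by
        rw [hrm, norm_div]
        push_cast
        ring
      rw [hrm, habsr]
      exact div_abs_step (hne (pt m x)) (hne (pt (m+1) x))
  have hθexp' : ∀ x : ℂ, Complex.exp (((θ x : ℝ) : ℂ) * Complex.I)
      = h x / (‖h x‖ : ℂ) := by
    intro x
    have := hθexp x n
    rwa [hptn] at this
  have hθcont : ContinuousOn θ K := by
    apply ContinuousOn.add continuousOn_const
    apply continuousOn_finset_sum
    intro k hk
    have hrk : Continuous (r k) := by
      apply Continuous.div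
      · exact hc.comp (continuous_const.mul continuous_id)
      · exact hc.comp (continuous_const.mul continuous_id)
      · intro x; exact hne _
    intro x hx
    exact ((Complex.continuousAt_arg (hrslit x hx k (Finset.mem_range.1 hk))).comp
      hrk.continuousAt).continuousWithinAt
  -- the loop
  set c : ℝ → ℂ := fun τ => (N : ℂ) * Complex.exp (((2*Real.pi*τ : ℝ) : ℂ) * Complex.I) with hcdef
  have hcabs : ∀ τ, ‖c τ‖ = N := by
    intro τ
    simp only [hcdef, norm_mul, Complex.norm_real, Real.norm_eq_abs, Complex.norm_exp_ofReal_mul_I,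
      _root_.abs_of_nonneg hNpos.le, mul_one]
  have hcK : ∀ τ, c τ ∈ K := fun τ => habsK _ (le_of_eq (hcabs τ))
  have hccont : Continuous c := by
    apply continuous_const.mul
    apply Complex.continuous_exp.comp
    exact (Complex.continuous_ofReal.comp (continuous_const.mul continuous_id)).mul
      continuous_const
  set D : ℝ → ℝ := fun τ => θ (c τ) - (Real.pi - 2*Real.pi*τ) with hDdef
  have hDcont : ContinuousOn D (Set.Icc 0 1) := by
    apply ContinuousOn.sub
    · exact (hθcont.comp hccont.continuousOn (fun τ _ => hcK τ))
    · exact (continuous_const.sub (continuous_const.mul continuous_id)).continuousOn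
  have hc10 : c 1 = c 0 := by
    simp only [hcdef, mul_one, mul_zero]
    norm_num
  have hD1 : D 1 = D 0 + 2*Real.pi := by
    simp only [hDdef, hc10]
    ring
  -- positivity of the real part
  have hpos : ∀ τ : ℝ, 0 < (Complex.exp (((D τ : ℝ) : ℂ) * Complex.I)).re := by
    intro τ
    have e0 : (((D τ : ℝ)) : ℂ) * Complex.I
        = ((θ (c τ) : ℝ) : ℂ) * Complex.I + (((2*Real.pi*τ - Real.pi : ℝ)) : ℂ) * Complex.I := by
      simp only [hDdef]
      push_cast
      ring
    have e2 : Complex.exp ((((2*Real.pi*τ - Real.pi : ℝ)) : ℂ) * Complex.I) = -(c τ) / (N : ℂ) := by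
      rw [show (((2*Real.pi*τ - Real.pi : ℝ)) : ℂ) * Complex.I
          = ((2*Real.pi*τ : ℝ) : ℂ) * Complex.I - (Real.pi : ℂ) * Complex.I by push_cast; ring]
      rw [Complex.exp_sub, Complex.exp_pi_mul_I]
      have hNne : (N : ℂ) ≠ 0 := by exact_mod_cast hNpos.ne'
      simp only [hcdef]
      field_simp
    rw [e0, Complex.exp_add, hθexp' (c τ), e2]
    set w := c τ with hwdef
    have hwabs : ‖w‖ = N := hcabs τ
    have hhw : h w ≠ 0 := hne w
    have key : h w / (‖h w‖ : ℂ) * (-w / (N:ℂ))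
        = (((‖h w‖ * N)⁻¹ : ℝ) : ℂ) * (h w * (-w)) := by
      push_cast
      have a1 : (‖h w‖ : ℂ) ≠ 0 := by exact_mod_cast norm_ne_zero_iff.mpr hhw
      have a2 : (N : ℂ) ≠ 0 := by exact_mod_cast hNpos.ne'
      field_simp
    rw [key, Complex.re_ofReal_mul]
    apply mul_pos
    · apply inv_pos.2
      exact mul_pos (norm_pos_iff.mpr hhw) hNpos
    · -- (h w * (-w)).re ≥ N
      have hw2 : h w = p w - (starRingEnd ℂ) w := by simp [hp]
      have e3 : h w * (-w) = (Complex.normSq w : ℂ) - p w * w := by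
        rw [hw2, show (p w - (starRingEnd ℂ) w) * (-w)
          = w * (starRingEnd ℂ) w - p w * w by ring, Complex.mul_conj]
      have e4 : (h w * (-w)).re = Complex.normSq w - (p w * w).re := by
        rw [e3]
        simp
      rw [e4]
      have e5 : Complex.normSq w = N^2 := by
        rw [← Complex.sq_norm, hwabs]
      have e6 : (p w * w).re ≤ C * N := by
        calc (p w * w).re ≤ ‖p w * w‖ := Complex.re_le_norm _
        _ = ‖p w‖ * ‖w‖ := norm_mul _ _
        _ ≤ C * N := by
            rw [hwabs]
            exact mul_le_mul_of_nonneg_right (hCp w) hNpos.le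
      have : N^2 - C*N = N := by rw [hN]; ring
      linarith
  -- final contradiction via IVT
  set x₁ : ℝ := 2*Real.pi*(⌈(D 0 - Real.pi)/(2*Real.pi)⌉ : ℤ) + Real.pi with hx₁def
  have hπ : (0:ℝ) < 2*Real.pi := by positivity
  have hle1 : D 0 ≤ x₁ := by
    have := Int.le_ceil ((D 0 - Real.pi)/(2*Real.pi))
    rw [div_le_iff₀ hπ] at this
    simp only [hx₁def]
    linarith [this]
  have hle2 : x₁ ≤ D 1 := by
    have h2 := Int.ceil_lt_add_one ((D 0 - Real.pi)/(2*Real.pi))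
    have h3 : 2*Real.pi*((⌈(D 0 - Real.pi)/(2*Real.pi)⌉ : ℤ) : ℝ)
        < 2*Real.pi*((D 0 - Real.pi)/(2*Real.pi) + 1) := by
      exact mul_lt_mul_of_pos_left h2 hπ
    have h4 : 2*Real.pi*((D 0 - Real.pi)/(2*Real.pi)) = D 0 - Real.pi := by
      field_simp
    rw [hD1]
    simp only [hx₁def]
    nlinarith [h3, h4]
  obtain ⟨τ, hτmem, hτ⟩ := intermediate_value_Icc (zero_le_one) hDcont ⟨hle1, hle2⟩
  have hcontra := hpos τ
  rw [hτ] at hcontra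
  have hexp : Complex.exp (((x₁ : ℝ) : ℂ) * Complex.I) = -1 := by
    rw [show (((x₁ : ℝ)) : ℂ) * Complex.I
        = ((⌈(D 0 - Real.pi)/(2*Real.pi)⌉ : ℤ) : ℂ) * (2 * (Real.pi:ℂ) * Complex.I)
          + (Real.pi:ℂ) * Complex.I by simp only [hx₁def]; push_cast; ring]
    rw [Complex.exp_add, Complex.exp_int_mul_two_pi_mul_I, Complex.exp_pi_mul_I, one_mul]
  rw [hexp] at hcontra
  simp at hcontra
  linarith



/-- The plane-topology claim used in the proof of case (3) of Sub-lemma 5.12: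
if `γ₁` is an `l₁`-periodic continuous curve and `γ₂` is an `l₂`-periodic continuous
curve in `ℝ²`, with `l₁, l₂` linearly independent, then every translate of the image
of `γ₁` intersects the image of `γ₂`. -/
theorem periodic_curves_intersect (l₁ l₂ : EuclideanSpace ℝ (Fin 2))
    (hli : LinearIndependent ℝ ![l₁, l₂])
    (γ₁ γ₂ : ℝ → EuclideanSpace ℝ (Fin 2))
    (hc₁ : Continuous γ₁) (hc₂ : Continuous γ₂)
    (hp₁ : ∀ t : ℝ, γ₁ (t + 1) = γ₁ t + l₁)
    (hp₂ : ∀ t : ℝ, γ₂ (t + 1) = γ₂ t + l₂)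
    (z : EuclideanSpace ℝ (Fin 2)) :
    ∃ s t : ℝ, γ₁ s + z = γ₂ t := by
  have hcard : Fintype.card (Fin 2) = Module.finrank ℝ (EuclideanSpace ℝ (Fin 2)) := by
    simp [finrank_euclideanSpace_fin]
  set B := basisOfLinearIndependentOfCardEqFinrank hli hcard with hB
  have hB0 : B 0 = l₁ := by
    simp [hB, coe_basisOfLinearIndependentOfCardEqFinrank]
  have hB1 : B 1 = l₂ := by
    simp [hB, coe_basisOfLinearIndependentOfCardEqFinrank]
  set F : ℂ → EuclideanSpace ℝ (Fin 2) := fun w => γ₂ w.im - γ₁ w.re - z with hF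
  have hFcont : Continuous F :=
    ((hc₂.comp Complex.continuous_im).sub (hc₁.comp Complex.continuous_re)).sub continuous_const
  have hcoordcont : ∀ i : Fin 2, Continuous (B.coord i) :=
    fun i => (B.coord i).continuous_of_finiteDimensional
  set h : ℂ → ℂ := fun w =>
    ((B.coord 0 (F w) : ℝ) : ℂ) + ((B.coord 1 (F w) : ℝ) : ℂ) * Complex.I with hh
  have hhc : Continuous h := by
    apply Continuous.add
    · exact Complex.continuous_ofReal.comp ((hcoordcont 0).comp hFcont)
    · exact (Complex.continuous_ofReal.comp ((hcoordcont 1).comp hFcont)).mul continuous_const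
  have hF1 : ∀ w, F (w + 1) = F w - l₁ := by
    intro w
    simp only [hF, Complex.add_re, Complex.add_im, Complex.one_re, Complex.one_im, add_zero]
    rw [hp₁]
    abel
  have hFI : ∀ w, F (w + Complex.I) = F w + l₂ := by
    intro w
    simp only [hF, Complex.add_re, Complex.add_im, Complex.I_re, Complex.I_im, add_zero]
    rw [hp₂]
    abel
  have hc00 : B.coord 0 l₁ = 1 := by
    rw [← hB0, Module.Basis.coord_apply, Module.Basis.repr_self]
    simp
  have hc10 : B.coord 1 l₁ = 0 := by
    rw [← hB0, Module.Basis.coord_apply, Module.Basis.repr_self]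
    simp
  have hc01 : B.coord 0 l₂ = 0 := by
    rw [← hB1, Module.Basis.coord_apply, Module.Basis.repr_self]
    simp
  have hc11 : B.coord 1 l₂ = 1 := by
    rw [← hB1, Module.Basis.coord_apply, Module.Basis.repr_self]
    simp
  have h1 : ∀ w, h (w + 1) = h w - 1 := by
    intro w
    simp only [hh, hF1, map_sub, hc00, hc10]
    push_cast
    ring
  have hI : ∀ w, h (w + Complex.I) = h w + Complex.I := by
    intro w
    simp only [hh, hFI, map_add, hc01, hc11]
    push_cast
    ring
  obtain ⟨w, hw⟩ := core_zero h hhc h1 hI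
  rw [Complex.ext_iff] at hw
  simp only [hh, Complex.add_re, Complex.ofReal_re, Complex.mul_re, Complex.I_re, Complex.I_im,
    Complex.ofReal_im, Complex.add_im, Complex.mul_im, Complex.zero_re, Complex.zero_im] at hw
  obtain ⟨hw0, hw1⟩ := hw
  have hw0' : B.coord 0 (F w) = 0 := by linarith [hw0]
  have hw1' : B.coord 1 (F w) = 0 := by linarith [hw1]
  have hFw : F w = 0 := by
    have hr : B.repr (F w) = 0 := by
      ext i
      fin_cases i
      · simpa [Module.Basis.coord_apply] using hw0'
      · simpa [Module.Basis.coord_apply] using hw1'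
    exact (LinearEquiv.map_eq_zero_iff B.repr).1 hr
  refine ⟨w.re, w.im, ?_⟩
  have h2 : γ₂ w.im - (γ₁ w.re + z) = 0 := by
    rw [← sub_sub]
    exact hFw
  exact (sub_eq_zero.mp h2).symm
end

section
/- Let U₀ be a nonempty, open, connected subset of ℝ² with U₀ + z = U₀ for every z ∈ ℤ². Then for every lattice vector l ∈ ℤ² there exists a continuous curve γ : ℝ → ℝ² whose image is contained in U₀ and which satisfies γ(t + 1) = γ(t) + l for all t ∈ ℝ. -/
/-- A vector of `ℝ²` is a lattice vector if all of its coordinates are integers. -/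
def IsLatticeVector (z : EuclideanSpace ℝ (Fin 2)) : Prop := ∀ i, ∃ m : ℤ, z i = (m : ℝ)

/-- The translate `A + z` of a set `A ⊆ ℝ²` by a vector `z`. -/
def setTranslate (A : Set (EuclideanSpace ℝ (Fin 2))) (z : EuclideanSpace ℝ (Fin 2)) :
    Set (EuclideanSpace ℝ (Fin 2)) := (· + z) '' A

/-- The auxiliary claim used in the proof of Sub-lemma 5.14: a nonempty, open, connected,
`ℤ²`-periodic subset `U₀ ⊆ ℝ²` contains, for every lattice vector `l ∈ ℤ²`, a continuous
`l`-periodic curve `γ` (i.e. `γ(t+1) = γ(t) + l` for all `t`). -/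
theorem exists_periodic_curve (U₀ : Set (EuclideanSpace ℝ (Fin 2)))
    (hopen : IsOpen U₀) (hconn : IsConnected U₀)
    (hper : ∀ z, IsLatticeVector z → setTranslate U₀ z = U₀)
    (l : EuclideanSpace ℝ (Fin 2)) (hl : IsLatticeVector l) :
    ∃ γ : ℝ → EuclideanSpace ℝ (Fin 2), Continuous γ ∧
      (∀ t : ℝ, γ t ∈ U₀) ∧ (∀ t : ℝ, γ (t + 1) = γ t + l) := by
  -- translation by a lattice vector preserves U₀
  have htrans : ∀ x ∈ U₀, ∀ z, IsLatticeVector z → x + z ∈ U₀ := by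
    intro x hx z hz
    have := hper z hz
    rw [← this]
    exact ⟨x, hx, rfl⟩
  obtain ⟨x₀, hx₀⟩ := hconn.nonempty
  have hx₀l : x₀ + l ∈ U₀ := htrans x₀ hx₀ l hl
  -- path connectedness
  have hpc : IsPathConnected U₀ := (hopen.isConnected_iff_isPathConnected).mp hconn
  obtain ⟨p, hp⟩ : JoinedIn U₀ x₀ (x₀ + l) := hpc.joinedIn x₀ hx₀ (x₀ + l) hx₀l
  -- f s = p.extend s - s • l, satisfies f 0 = f 1 = x₀
  set f : ℝ → EuclideanSpace ℝ (Fin 2) := fun s => p.extend s - s • l with hf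
  have hfc : Continuous f := p.continuous_extend.sub (continuous_id.smul continuous_const)
  have hf0 : f 0 = f 1 := by
    simp [hf, Path.extend_zero, Path.extend_one]
  refine ⟨fun t => f (Int.fract t) + t • l, ?_, ?_, ?_⟩
  · exact ((hfc.continuousOn.comp_fract'' hf0)).add (continuous_id.smul continuous_const)
  · intro t
    show f (Int.fract t) + t • l ∈ U₀
    have h1 : f (Int.fract t) + t • l = p.extend (Int.fract t) + (t - Int.fract t) • l := by
      simp only [hf, sub_smul]
      abel
    rw [h1]
    have h2 : t - Int.fract t = ((⌊t⌋ : ℤ) : ℝ) := by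
      rw [Int.self_sub_fract]
    rw [h2]
    have hmem : p.extend (Int.fract t) ∈ U₀ := by
      rw [Path.extend]
      exact hp _
    refine htrans _ hmem _ ?_
    intro i
    obtain ⟨m, hm⟩ := hl i
    refine ⟨⌊t⌋ * m, ?_⟩
    simp only [PiLp.smul_apply, hm, smul_eq_mul]
    push_cast
    ring
  · intro t
    show f (Int.fract (t + 1)) + (t + 1) • l = f (Int.fract t) + t • l + l
    rw [Int.fract_add_one, add_smul, one_smul]
    abel
end

section
/- Let U₀ be a nonempty, open, connected subset of ℝ² with U₀ + z = U₀ for every z ∈ ℤ². Then every connected component of the complement ℝ² \ U₀ is a bounded set. -/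
open Bornology

section AuxiliaryWindingArgument

open Complex Set


open Complex Set

/-- If the principal arguments of `a` and `b` are within `π` of each other,
the argument of the quotient is the difference of arguments. -/
lemma arg_div_eq_sub {a b : ℂ} (ha : a ≠ 0) (hb : b ≠ 0)
    (h : |b.arg - a.arg| < Real.pi) : (b / a).arg = b.arg - a.arg := by
  have h1 : ((b / a).arg : Real.Angle) = ((b.arg - a.arg : ℝ) : Real.Angle) := by
    rw [Complex.arg_div_coe_angle hb ha, Real.Angle.coe_sub]
  have h2 : (b / a).arg ∈ Set.Ioc (-Real.pi) Real.pi :=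
    ⟨Complex.neg_pi_lt_arg _, Complex.arg_le_pi _⟩
  have h3 : b.arg - a.arg ∈ Set.Ioc (-Real.pi) Real.pi := by
    rw [abs_lt] at h
    exact ⟨h.1, h.2.le⟩
  calc (b / a).arg = ((b / a).arg : Real.Angle).toReal := by
        rw [Real.Angle.toReal_coe_eq_self_iff_mem_Ioc.mpr h2]
    _ = ((b.arg - a.arg : ℝ) : Real.Angle).toReal := by rw [h1]
    _ = b.arg - a.arg := Real.Angle.toReal_coe_eq_self_iff_mem_Ioc.mpr h3

lemma arg_div_eq_sub_of_re_pos {a b : ℂ} (ha : 0 < a.re) (hb : 0 < b.re) :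
    (b / a).arg = b.arg - a.arg := by
  have ha0 : a ≠ 0 := fun h => by simp [h] at ha
  have hb0 : b ≠ 0 := fun h => by simp [h] at hb
  refine arg_div_eq_sub ha0 hb0 ?_
  have h1 : |a.arg| < Real.pi / 2 := Complex.abs_arg_lt_pi_div_two_iff.mpr (Or.inl ha)
  have h2 : |b.arg| < Real.pi / 2 := Complex.abs_arg_lt_pi_div_two_iff.mpr (Or.inl hb)
  calc |b.arg - a.arg| ≤ |b.arg| + |a.arg| := abs_sub _ _
    _ < Real.pi / 2 + Real.pi / 2 := by linarith
    _ = Real.pi := by ring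

lemma arg_div_eq_sub_of_im_neg {a b : ℂ} (ha : a.im < 0) (hb : b.im < 0) :
    (b / a).arg = b.arg - a.arg := by
  have ha0 : a ≠ 0 := fun h => by simp [h] at ha
  have hb0 : b ≠ 0 := fun h => by simp [h] at hb
  refine arg_div_eq_sub ha0 hb0 ?_
  have h1 : a.arg < 0 := Complex.arg_neg_iff.mpr ha
  have h2 : b.arg < 0 := Complex.arg_neg_iff.mpr hb
  have h3 := Complex.neg_pi_lt_arg a
  have h4 := Complex.neg_pi_lt_arg b
  rw [abs_lt]; constructor <;> linarith

lemma arg_div_eq_sub_of_im_pos {a b : ℂ} (ha : 0 < a.im) (hb : 0 < b.im) :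
    (b / a).arg = b.arg - a.arg := by
  have ha0 : a ≠ 0 := fun h => by simp [h] at ha
  have hb0 : b ≠ 0 := fun h => by simp [h] at hb
  refine arg_div_eq_sub ha0 hb0 ?_
  have h1 : 0 < a.arg := by
    rcases lt_or_eq_of_le (Complex.arg_nonneg_iff.mpr ha.le) with h | h
    · exact h
    · exfalso
      rw [eq_comm, Complex.arg_eq_zero_iff] at h
      linarith [h.2, ha]
  have h2 : 0 < b.arg := by
    rcases lt_or_eq_of_le (Complex.arg_nonneg_iff.mpr hb.le) with h | h
    · exact h
    · exfalso
      rw [eq_comm, Complex.arg_eq_zero_iff] at h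
      linarith [h.2, hb]
  have h3 : a.arg < Real.pi := Complex.arg_lt_pi_iff.mpr (Or.inr (by linarith))
  have h4 : b.arg < Real.pi := Complex.arg_lt_pi_iff.mpr (Or.inr (by linarith))
  rw [abs_lt]
  constructor <;> linarith

/-- Telescoping sum over `Finset.Ico` of integers, in any `AddCommGroup`. -/
lemma telescope_Ico {G : Type*} [AddCommGroup G] (f : ℤ → G) (M : ℤ) :
    ∀ N : ℤ, M ≤ N → ∑ k ∈ Finset.Ico M N, (f (k + 1) - f k) = f N - f M := by
  refine Int.le_induction ?_ ?_
  · simp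
  · intro N hMN ih
    have hins : Finset.Ico M (N + 1) = insert N (Finset.Ico M N) := by
      ext k; simp only [Finset.mem_Ico, Finset.mem_insert]; omega
    rw [hins, Finset.sum_insert (by simp), ih]
    abel


namespace BlockNet

/-- The turning of the polygonal net, as seen from `x`, along the `k`-th segment. -/
noncomputable def A (V : ℤ → ℂ) (x : ℂ) (k : ℤ) : ℝ := ((V (k + 1) - x) / (V k - x)).arg

/-- Total winding-type quantity computed with cutoff `N`. -/
noncomputable def F (V : ℤ → ℂ) (x : ℂ) (N : ℤ) : ℝ :=
  (-(V (-N) - x)).arg - (V N - x).arg + ∑ k ∈ Finset.Ico (-N) N, A V x k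

/-- `N` is a good cutoff for `x`: beyond `N` the net is strictly to the right of `x`,
and before `-N` strictly to the left. -/
def Good (V : ℤ → ℂ) (x : ℂ) (N : ℤ) : Prop :=
  (∀ k, N ≤ k → 0 < (V k - x).re) ∧ (∀ k, k ≤ -N → (V k - x).re < 0)

lemma Good.one_le {V : ℤ → ℂ} {x : ℂ} {N : ℤ} (h : Good V x N) : 1 ≤ N := by
  by_contra h'
  push_neg at h'
  have h1 := h.1 0 (by omega)
  have h2 := h.2 0 (by omega)
  linarith

lemma Good.mono {V : ℤ → ℂ} {x : ℂ} {N M : ℤ} (h : Good V x N) (hNM : N ≤ M) :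
    Good V x M :=
  ⟨fun k hk => h.1 k (by omega), fun k hk => h.2 k (by omega)⟩

lemma F_succ {V : ℤ → ℂ} {x : ℂ} {N : ℤ} (h : Good V x N) : F V x (N + 1) = F V x N := by
  have hN1 := h.one_le
  have hA_N : A V x N = (V (N + 1) - x).arg - (V N - x).arg :=
    arg_div_eq_sub_of_re_pos (h.1 N le_rfl) (h.1 (N + 1) (by omega))
  have hA_neg : A V x (-N - 1) = (-(V (-N) - x)).arg - (-(V (-N - 1) - x)).arg := by
    have e1 : (-N - 1 + 1 : ℤ) = -N := by ring
    have e2 : (V (-N) - x) / (V (-N - 1) - x)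
        = (-(V (-N) - x)) / (-(V (-N - 1) - x)) := by rw [neg_div_neg_eq]
    rw [A, e1, e2]
    refine arg_div_eq_sub_of_re_pos ?_ ?_
    · have := h.2 (-N - 1) (by omega); simp only [Complex.neg_re]; linarith
    · have := h.2 (-N) le_rfl; simp only [Complex.neg_re]; linarith
  have hins : Finset.Ico (-(N + 1)) (N + 1)
      = insert (-N - 1) (insert N (Finset.Ico (-N) N)) := by
    ext k
    simp only [Finset.mem_Ico, Finset.mem_insert]
    omega
  have h1 : (-N - 1 : ℤ) ∉ insert N (Finset.Ico (-N) N) := by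
    simp only [Finset.mem_insert, Finset.mem_Ico]
    omega
  have h2 : (N : ℤ) ∉ Finset.Ico (-N) N := by simp
  rw [F, F, hins, Finset.sum_insert h1, Finset.sum_insert h2, hA_N, hA_neg]
  have e3 : (-(N + 1) : ℤ) = -N - 1 := by ring
  rw [e3]
  ring

lemma F_eq_of_good {V : ℤ → ℂ} {x : ℂ} {N M : ℤ} (hN : Good V x N) (hM : Good V x M) :
    F V x N = F V x M := by
  wlog hle : N ≤ M generalizing N M
  · exact (this hM hN (by omega)).symm
  have key : ∀ M' : ℤ, N ≤ M' → F V x M' = F V x N := by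
    refine Int.le_induction ?_ ?_
    · rfl
    · intro M' hNM' ih
      rw [F_succ (hN.mono hNM'), ih]
  exact (key M hle).symm

/-- A point not on a segment sees the ratio of endpoint differences in the slit plane. -/
lemma ratio_mem_slitPlane {a b x : ℂ} (hx : x ∉ segment ℝ a b) :
    a - x ≠ 0 ∧ b - x ≠ 0 ∧ (b - x) / (a - x) ∈ Complex.slitPlane := by
  have ha : a - x ≠ 0 := by
    intro h
    exact hx (by rw [sub_eq_zero] at h; rw [← h]; exact left_mem_segment ℝ a b)
  have hb : b - x ≠ 0 := by
    intro h
    exact hx (by rw [sub_eq_zero] at h; rw [← h]; exact right_mem_segment ℝ a b)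
  refine ⟨ha, hb, ?_⟩
  rw [Complex.mem_slitPlane_iff]
  by_contra hcon
  push_neg at hcon
  set r := (b - x) / (a - x) with hr
  have him : r.im = 0 := hcon.2
  have hre : r.re ≤ 0 := hcon.1
  have hreal : r = (r.re : ℂ) := Complex.ext (by simp) (by simp [him])
  set c := r.re with hc
  have hbx : b - x = (c : ℂ) * (a - x) := by
    have h' : b - x = r * (a - x) := by rw [hr]; field_simp
    rw [hreal] at h'
    exact h'
  have h1c : (0:ℝ) < 1 - c := by linarith
  have h1c' : ((1 : ℂ) - (c : ℂ)) ≠ 0 := by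
    have : ((1 - c : ℝ) : ℂ) ≠ 0 := by exact_mod_cast ne_of_gt h1c
    push_cast at this
    exact this
  refine hx ⟨-c / (1 - c), 1 / (1 - c), div_nonneg (by linarith) h1c.le, by positivity,
    by field_simp; ring, ?_⟩
  rw [Complex.real_smul, Complex.real_smul]
  push_cast
  field_simp
  linear_combination hbx

end BlockNet
namespace BlockNet

/-- From `V (k+P) = V k + 1` we get the general translation formula. -/
lemma V_add_mul {V : ℤ → ℂ} {P : ℤ} (hper : ∀ k, V (k + P) = V k + 1) (r : ℤ) :
    ∀ q : ℤ, V (r + P * q) = V r + (q : ℂ) := by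
  intro q
  induction q using Int.induction_on with
  | zero => simp
  | succ i ih =>
      have e : r + P * (i + 1) = (r + P * i) + P := by ring
      rw [e, hper, ih]
      push_cast
      ring
  | pred i ih =>
      have e : (r + P * (-i - 1)) + P = r + P * (-i) := by ring
      have h2 := hper (r + P * (-i - 1))
      rw [e] at h2
      have : V (r + P * (-i - 1)) = V (r + P * (-i)) - 1 := by
        rw [h2]; ring
      rw [this, ih]
      push_cast
      ring

lemma V_decomp {V : ℤ → ℂ} {P : ℤ} (hP : 1 ≤ P) (hper : ∀ k, V (k + P) = V k + 1) (k : ℤ) :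
    V k = V (k % P) + ((k / P : ℤ) : ℂ) := by
  have h := V_add_mul hper (k % P) (k / P)
  rwa [Int.emod_add_mul_ediv k P] at h

/-- Existence of a good cutoff, uniformly on a unit ball. -/
lemma good_exists {V : ℤ → ℂ} {P : ℤ} (hP : 1 ≤ P) (hper : ∀ k, V (k + P) = V k + 1)
    (x₀ : ℂ) : ∃ N, ∀ x ∈ Metric.ball x₀ 1, Good V x N := by
  have hPne : P ≠ 0 := by omega
  have hP0 : (0:ℤ) < P := by omega
  obtain ⟨C, hC0, hC⟩ : ∃ C : ℝ, 0 ≤ C ∧ ∀ r ∈ Finset.Ico (0:ℤ) P, |(V r).re| ≤ C := by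
    have hne : (Finset.Ico (0:ℤ) P).Nonempty := ⟨0, Finset.mem_Ico.mpr ⟨le_rfl, hP0⟩⟩
    refine ⟨(Finset.Ico (0:ℤ) P).sup' hne (fun r => |(V r).re|), ?_, ?_⟩
    · exact le_trans (abs_nonneg ((V 0).re))
        (Finset.le_sup' (fun r => |(V r).re|) (Finset.mem_Ico.mpr ⟨le_rfl, hP0⟩))
    · intro r hr
      exact Finset.le_sup' (fun r => |(V r).re|) hr
  set Q : ℤ := ⌈C + |x₀.re| + 2⌉ with hQ
  have hQge : (Q : ℝ) ≥ C + |x₀.re| + 2 := Int.le_ceil _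
  refine ⟨P * Q, ?_⟩
  intro x hx
  have hxre : |x.re| ≤ |x₀.re| + 1 := by
    have h1 : |(x - x₀).re| ≤ ‖x - x₀‖ := Complex.abs_re_le_norm _
    rw [Complex.sub_re] at h1
    have h2 : ‖x - x₀‖ < 1 := by
      rw [← Complex.dist_eq]
      exact hx
    calc |x.re| ≤ |x.re - x₀.re| + |x₀.re| := by
          have := abs_sub_abs_le_abs_sub x.re x₀.re
          have := abs_add_le (x.re - x₀.re) x₀.re
          calc |x.re| = |(x.re - x₀.re) + x₀.re| := by ring_nf
            _ ≤ |x.re - x₀.re| + |x₀.re| := abs_add_le _ _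
      _ ≤ |x₀.re| + 1 := by linarith
  have hmem : ∀ k : ℤ, k % P ∈ Finset.Ico (0:ℤ) P := by
    intro k
    simp only [Finset.mem_Ico]
    exact ⟨Int.emod_nonneg k hPne, Int.emod_lt_of_pos k hP0⟩
  have hre : ∀ k : ℤ, (V k).re = (V (k % P)).re + ((k / P : ℤ) : ℝ) := by
    intro k
    rw [V_decomp hP hper k]
    simp
  constructor
  · intro k hk
    have hdiv : Q ≤ k / P := by
      rw [Int.le_ediv_iff_mul_le hP0]
      calc Q * P = P * Q := by ring
        _ ≤ k := hk
    have hdiv' : (Q : ℝ) ≤ ((k / P : ℤ) : ℝ) := by exact_mod_cast hdiv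
    have h1 : -(C) ≤ (V (k % P)).re := by
      have := hC _ (hmem k)
      have := abs_le.mp this
      linarith [this.1]
    have h2 : (V k - x).re = (V (k % P)).re + ((k / P : ℤ) : ℝ) - x.re := by
      rw [Complex.sub_re, hre k]
    rw [h2]
    have : x.re ≤ |x₀.re| + 1 := le_trans (le_abs_self _) hxre
    linarith
  · intro k hk
    have hdiv : k / P ≤ -Q := by
      have h1 : k ≤ P * (-Q) := by rw [Int.mul_neg]; omega
      calc k / P ≤ (P * (-Q)) / P := Int.ediv_le_ediv hP0 h1
        _ = -Q := Int.mul_ediv_cancel_left _ hPne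
    have hdiv' : ((k / P : ℤ) : ℝ) ≤ -(Q : ℝ) := by exact_mod_cast hdiv
    have h1 : (V (k % P)).re ≤ C := by
      have := abs_le.mp (hC _ (hmem k))
      linarith [this.2]
    have h2 : (V k - x).re = (V (k % P)).re + ((k / P : ℤ) : ℝ) - x.re := by
      rw [Complex.sub_re, hre k]
    rw [h2]
    have : -(|x₀.re| + 1) ≤ x.re := by
      have := abs_le.mp hxre
      linarith [this.1]
    linarith

end BlockNet
namespace BlockNet

lemma F_angle {V : ℤ → ℂ} {x : ℂ} {N : ℤ} (hnz : ∀ k, V k - x ≠ 0) (hN : 1 ≤ N) :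
    ((F V x N : ℝ) : Real.Angle) = ((Real.pi : ℝ) : Real.Angle) := by
  have hsum : ((∑ k ∈ Finset.Ico (-N) N, A V x k : ℝ) : Real.Angle)
      = ∑ k ∈ Finset.Ico (-N) N, ((A V x k : ℝ) : Real.Angle) :=
    map_sum Real.Angle.coeHom _ _
  have hterm : ∀ k, ((A V x k : ℝ) : Real.Angle)
      = (((V (k + 1) - x).arg : ℝ) : Real.Angle) - (((V k - x).arg : ℝ) : Real.Angle) :=
    fun k => Complex.arg_div_coe_angle (hnz (k + 1)) (hnz k)
  have htel : ∑ k ∈ Finset.Ico (-N) N, ((A V x k : ℝ) : Real.Angle)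
      = (((V N - x).arg : ℝ) : Real.Angle) - (((V (-N) - x).arg : ℝ) : Real.Angle) := by
    rw [Finset.sum_congr rfl (fun k _ => hterm k)]
    exact telescope_Ico (fun k => (((V k - x).arg : ℝ) : Real.Angle)) (-N) N (by omega)
  have hneg : (((-(V (-N) - x)).arg : ℝ) : Real.Angle)
      = (((V (-N) - x).arg : ℝ) : Real.Angle) + ((Real.pi : ℝ) : Real.Angle) :=
    Complex.arg_neg_coe_angle (hnz (-N))
  rw [F, Real.Angle.coe_add, Real.Angle.coe_sub, hsum, htel, hneg]
  abel

lemma F_eval_above {V : ℤ → ℂ} {x : ℂ} {N : ℤ} (hN : 0 ≤ N)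
    (him : ∀ k, (V k).im < x.im) : F V x N = Real.pi := by
  have hlt : ∀ k, (V k - x).im < 0 := by
    intro k
    rw [Complex.sub_im]
    linarith [him k]
  have hA : ∀ k, A V x k = (V (k + 1) - x).arg - (V k - x).arg :=
    fun k => arg_div_eq_sub_of_im_neg (hlt k) (hlt (k + 1))
  rw [F, Finset.sum_congr rfl (fun k _ => hA k),
    telescope_Ico (fun k => (V k - x).arg) (-N) N (by omega),
    Complex.arg_neg_eq_arg_add_pi_of_im_neg (hlt (-N))]
  ring

lemma F_eval_below {V : ℤ → ℂ} {x : ℂ} {N : ℤ} (hN : 0 ≤ N)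
    (him : ∀ k, x.im < (V k).im) : F V x N = -Real.pi := by
  have hlt : ∀ k, 0 < (V k - x).im := by
    intro k
    rw [Complex.sub_im]
    linarith [him k]
  have hA : ∀ k, A V x k = (V (k + 1) - x).arg - (V k - x).arg :=
    fun k => arg_div_eq_sub_of_im_pos (hlt k) (hlt (k + 1))
  rw [F, Finset.sum_congr rfl (fun k _ => hA k),
    telescope_Ico (fun k => (V k - x).arg) (-N) N (by omega),
    Complex.arg_neg_eq_arg_sub_pi_of_im_pos (hlt (-N))]
  ring

/-- The main blocking lemma: a connected set avoiding a horizontally periodic net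
cannot have points both strictly above and strictly below the net. -/
theorem blocking (V : ℤ → ℂ) (P : ℤ) (hP : 1 ≤ P) (hper : ∀ k, V (k + P) = V k + 1)
    (m M : ℝ) (him : ∀ k, m ≤ (V k).im ∧ (V k).im ≤ M)
    (K : Set ℂ) (hK : IsPreconnected K)
    (hdisj : ∀ y ∈ K, ∀ k, y ∉ segment ℝ (V k) (V (k + 1)))
    {a b : ℂ} (ha : a ∈ K) (hb : b ∈ K) (haM : M < a.im) (hbm : b.im < m) : False := by
  classical
  have hgood : ∀ x : ℂ, ∃ N, ∀ y ∈ Metric.ball x 1, Good V y N := fun x =>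
    good_exists hP hper x
  choose Nof hNof using hgood
  set ν : ℂ → ℝ := fun x => F V x (Nof x) with hνdef
  have hself : ∀ x : ℂ, Good V x (Nof x) := fun x => hNof x x (Metric.mem_ball_self one_pos)
  have hν_eq : ∀ x N, Good V x N → F V x N = ν x := fun x N h => F_eq_of_good h (hself x)
  have hnz : ∀ y ∈ K, ∀ k, V k - y ≠ 0 := by
    intro y hy k h
    rw [sub_eq_zero] at h
    exact hdisj y hy k (h ▸ left_mem_segment ℝ (V k) (V (k + 1)))
  -- continuity of ν on K
  have hcont : ∀ y ∈ K, ContinuousAt ν y := by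
    intro y hy
    have heq : ∀ x ∈ Metric.ball y 1, F V x (Nof y) = ν x :=
      fun x hx => hν_eq x (Nof y) (hNof y x hx)
    have hGy : Good V y (Nof y) := hself y
    have hFcont : ContinuousAt (fun x => F V x (Nof y)) y := by
      refine ContinuousAt.add (ContinuousAt.sub ?_ ?_) ?_
      · have hin : (-(V (-(Nof y)) - y)) ∈ Complex.slitPlane := by
          rw [Complex.mem_slitPlane_iff]
          left
          rw [Complex.neg_re]
          have := hGy.2 (-(Nof y)) le_rfl
          linarith
        have hinner : Continuous (fun x : ℂ => -(V (-(Nof y)) - x)) := by fun_prop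
        show ContinuousAt (Complex.arg ∘ fun x : ℂ => -(V (-(Nof y)) - x)) y
        exact ContinuousAt.comp (x := y) (Complex.continuousAt_arg hin) hinner.continuousAt
      · have hin : (V (Nof y) - y) ∈ Complex.slitPlane := by
          rw [Complex.mem_slitPlane_iff]
          left
          exact hGy.1 (Nof y) le_rfl
        have hinner : Continuous (fun x : ℂ => V (Nof y) - x) := by fun_prop
        show ContinuousAt (Complex.arg ∘ fun x : ℂ => V (Nof y) - x) y
        exact ContinuousAt.comp (x := y) (Complex.continuousAt_arg hin) hinner.continuousAt
      · refine tendsto_finset_sum _ ?_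
        intro k _
        obtain ⟨hak, hbk, hslit⟩ := ratio_mem_slitPlane (hdisj y hy k)
        have hinner : ContinuousAt (fun x : ℂ => (V (k + 1) - x) / (V k - x)) y := by
          refine ContinuousAt.div ?_ ?_ hak
          · exact (continuous_const.sub continuous_id).continuousAt
          · exact (continuous_const.sub continuous_id).continuousAt
        show ContinuousAt (Complex.arg ∘ fun x : ℂ => (V (k + 1) - x) / (V k - x)) y
        exact ContinuousAt.comp (x := y) (Complex.continuousAt_arg hslit) hinner
    refine hFcont.congr ?_
    exact Filter.eventuallyEq_of_mem (Metric.ball_mem_nhds y one_pos) heq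
  -- values of ν at a and b
  have hva : ν a = Real.pi := by
    rw [← hν_eq a (Nof a) (hself a)]
    exact F_eval_above (by linarith [(hself a).one_le]) (fun k => lt_of_le_of_lt (him k).2 haM)
  have hvb : ν b = -Real.pi := by
    rw [← hν_eq b (Nof b) (hself b)]
    exact F_eval_below (by linarith [(hself b).one_le]) (fun k => lt_of_lt_of_le hbm (him k).1)
  -- the image is an interval, so 0 is attained
  have himg : IsPreconnected (ν '' K) :=
    hK.image ν (fun y hy => (hcont y hy).continuousWithinAt)
  have hord : Set.OrdConnected (ν '' K) := himg.ordConnected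
  have h0 : (0 : ℝ) ∈ ν '' K := by
    refine hord.out ⟨b, hb, hvb⟩ ⟨a, ha, hva⟩ ?_
    constructor
    · linarith [Real.pi_pos]
    · linarith [Real.pi_pos]
  obtain ⟨y, hyK, hy0⟩ := h0
  have hang : ((ν y : ℝ) : Real.Angle) = ((Real.pi : ℝ) : Real.Angle) := by
    rw [← hν_eq y (Nof y) (hself y)]
    exact F_angle (hnz y hyK) (hself y).one_le
  rw [hy0] at hang
  have hfin : ((Real.pi : ℝ) : Real.Angle) = 0 := by
    rw [← hang]
    exact Real.Angle.coe_zero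
  exact Real.Angle.pi_ne_zero hfin

end BlockNet
namespace BlockNet

/-- Points on a segment are within the distance of the endpoints from the left endpoint. -/
lemma dist_le_of_mem_segment {A B u : ℂ} (hu : u ∈ segment ℝ A B) : dist u A ≤ dist B A := by
  obtain ⟨s, t, hs, ht, hst, rfl⟩ := hu
  have : s • A + t • B - A = t • (B - A) := by
    have hs1 : s = 1 - t := by linarith
    rw [hs1]
    push_cast [Complex.real_smul]
    ring
  rw [dist_eq_norm, this, norm_smul, dist_eq_norm]
  have ht1 : t ≤ 1 := by linarith
  calc ‖t‖ * ‖B - A‖ ≤ 1 * ‖B - A‖ := by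
        apply mul_le_mul_of_nonneg_right _ (norm_nonneg _)
        rw [Real.norm_eq_abs, _root_.abs_of_nonneg ht]
        exact ht1
    _ = ‖B - A‖ := one_mul _

/-- A path inside an open set can be replaced by a polygonal chain inside the set. -/
lemma net_exists {W : Set ℂ} (hW : IsOpen W) {p q : ℂ} (γ : Path p q) (hγ : ∀ t, γ t ∈ W) :
    ∃ (P : ℕ) (Vb : ℕ → ℂ), 1 ≤ P ∧ Vb 0 = p ∧ Vb P = q ∧
      ∀ i < P, segment ℝ (Vb i) (Vb (i + 1)) ⊆ W := by
  have hcomp : IsCompact (Set.range γ) := isCompact_range γ.continuous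
  have hsub : Set.range γ ⊆ W := by rintro - ⟨t, rfl⟩; exact hγ t
  obtain ⟨δ, hδ, hδsub⟩ := hcomp.exists_cthickening_subset_open hW hsub
  have huc : UniformContinuous γ := CompactSpace.uniformContinuous_of_continuous γ.continuous
  obtain ⟨η, hη, hηd⟩ := Metric.uniformContinuous_iff.mp huc δ hδ
  obtain ⟨P, hP⟩ := exists_nat_one_div_lt hη
  set Pn := P + 1 with hPn
  have hPn1 : 1 ≤ Pn := by omega
  have hPnR : (0:ℝ) < Pn := by positivity
  refine ⟨Pn, fun i => γ.extend (i / Pn), hPn1, ?_, ?_, ?_⟩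
  · norm_num
  · show γ.extend ((Pn:ℝ) / Pn) = q
    have : ((Pn : ℝ) / Pn) = 1 := by field_simp
    rw [this, Path.extend_one]
  · intro i hi u hu
    have hmem : ∀ j : ℕ, j ≤ Pn → ((j : ℝ) / Pn) ∈ Set.Icc (0:ℝ) 1 := by
      intro j hj
      constructor
      · positivity
      · rw [div_le_one hPnR]
        exact_mod_cast hj
    have hti : ((i:ℝ)/Pn) ∈ Set.Icc (0:ℝ) 1 := hmem i (by omega)
    have hti1 : (((i+1:ℕ):ℝ)/Pn) ∈ Set.Icc (0:ℝ) 1 := hmem (i+1) (by omega)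
    have hd : dist (γ.extend ((i+1:ℕ) / Pn)) (γ.extend (i / Pn)) < δ := by
      rw [Path.extend_apply γ hti1, Path.extend_apply γ hti]
      apply hηd
      rw [Subtype.dist_eq]
      simp only [dist_eq_norm]
      have : (((i+1:ℕ):ℝ)/Pn) - ((i:ℝ)/Pn) = 1 / Pn := by
        push_cast
        field_simp
        ring
      rw [this]
      rw [Real.norm_eq_abs, abs_of_pos (by positivity)]
      calc (1:ℝ)/Pn ≤ 1/(P+1) := by
            apply div_le_div_of_nonneg_left one_pos.le (by positivity)
            · exact_mod_cast le_refl _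
        _ < η := by exact_mod_cast hP
    have : dist u (γ.extend (i / Pn)) < δ := lt_of_le_of_lt (dist_le_of_mem_segment hu) hd
    have hin : γ.extend ((i:ℝ) / Pn) ∈ Set.range γ := by
      rw [Path.extend_apply γ hti]
      exact Set.mem_range_self _
    exact hδsub (Metric.thickening_subset_cthickening δ _
      (Metric.ball_subset_thickening hin δ (Metric.mem_ball.mpr this)))

/-- Main extent lemma: if `W` is open, invariant under integer vertical translations, and
contains a path from some `p` to `p + 1`, then any preconnected set disjoint from `W` has
uniformly bounded vertical extent. -/
lemma extent {W : Set ℂ} (hWopen : IsOpen W) {p : ℂ} (γ : Path p (p + 1))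
    (hγ : ∀ t, γ t ∈ W)
    (hWtrans : ∀ n : ℤ, (fun w => w + (n : ℂ) * Complex.I) '' W = W)
    (hWtransR : ∀ n : ℤ, (fun w => w + (n : ℂ)) '' W = W)
    {K : Set ℂ} (hK : IsPreconnected K) (hdisj : ∀ y ∈ K, y ∉ W) :
    ∃ D : ℝ, ∀ a ∈ K, ∀ b ∈ K, a.im - b.im ≤ D := by
  classical
  obtain ⟨P, Vb, hP1, hVb0, hVbP, hseg⟩ := net_exists hWopen γ hγ
  -- vertical bounds of the base chain
  have hne : (Finset.range (P + 1)).Nonempty := ⟨0, by simp⟩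
  set m : ℝ := (Finset.range (P + 1)).inf' hne (fun i => (Vb i).im) with hm
  set M : ℝ := (Finset.range (P + 1)).sup' hne (fun i => (Vb i).im) with hM
  have hmle : ∀ i, i ≤ P → m ≤ (Vb i).im := by
    intro i hi
    exact Finset.inf'_le (fun j => (Vb j).im) (Finset.mem_range.mpr (by omega))
  have hMge : ∀ i, i ≤ P → (Vb i).im ≤ M := by
    intro i hi
    exact Finset.le_sup' (fun j => (Vb j).im) (Finset.mem_range.mpr (by omega))
  refine ⟨M - m + 2, ?_⟩
  by_contra hcon
  push_neg at hcon
  obtain ⟨a, ha, b, hb, hab⟩ := hcon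
  -- the integer net
  have hPZ : (0:ℤ) < (P:ℤ) := by exact_mod_cast hP1
  have hPZne : (P:ℤ) ≠ 0 := ne_of_gt hPZ
  set V : ℤ → ℂ := fun k => Vb ((k % (P:ℤ)).toNat) + ((k / (P:ℤ) : ℤ) : ℂ) with hV
  have hmodmem : ∀ k : ℤ, 0 ≤ k % (P:ℤ) ∧ k % (P:ℤ) < (P:ℤ) :=
    fun k => ⟨Int.emod_nonneg k hPZne, Int.emod_lt_of_pos k hPZ⟩
  have hper : ∀ k, V (k + (P:ℤ)) = V k + 1 := by
    intro k
    have h1 : (k + (P:ℤ)) % (P:ℤ) = k % (P:ℤ) := by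
      have := Int.add_mul_emod_self_right (a := k) (b := 1) (c := (P:ℤ))
      simpa using this
    have h2 : (k + (P:ℤ)) / (P:ℤ) = k / (P:ℤ) + 1 := by
      have := Int.add_mul_ediv_right k 1 hPZne
      simpa using this
    rw [hV]
    simp only [h1, h2]
    push_cast
    ring
  -- segments of the net and their translates lie in W
  have hsegnet : ∀ (k : ℤ) (n : ℤ), ∀ u ∈ segment ℝ (V k + (n:ℂ) * Complex.I)
      (V (k + 1) + (n:ℂ) * Complex.I), u ∈ W := by
    intro k n u hu
    -- express V k, V (k+1) via the base chain
    set r : ℤ := k % (P:ℤ) with hr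
    set s : ℤ := k / (P:ℤ) with hs
    have hr0 : 0 ≤ r := (hmodmem k).1
    have hrP : r < (P:ℤ) := (hmodmem k).2
    have hkdecomp : k = (P:ℤ) * s + r := by
      rw [hr, hs]
      linarith [Int.emod_add_mul_ediv k (P:ℤ)]
    have key : ∃ (i : ℕ) (t : ℤ), i < P ∧ V k = Vb i + (t:ℂ) ∧ V (k+1) = Vb (i+1) + (t:ℂ) := by
      rcases lt_or_eq_of_le (by omega : r + 1 ≤ (P:ℤ)) with hlt | heq
      · -- r + 1 < P
        have hdm : (k+1) / (P:ℤ) = s ∧ (k+1) % (P:ℤ) = r + 1 :=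
          (Int.ediv_emod_unique hPZ).mpr ⟨by linarith [hkdecomp], by omega, hlt⟩
        refine ⟨r.toNat, s, by omega, ?_, ?_⟩
        · rw [hV]
        · rw [hV]
          simp only [hdm.1, hdm.2]
          congr 2
          omega
      · -- r + 1 = P
        have hdm : (k+1) / (P:ℤ) = s + 1 ∧ (k+1) % (P:ℤ) = 0 :=
          (Int.ediv_emod_unique hPZ).mpr ⟨by
            have hPs : (P:ℤ) * (s+1) = (P:ℤ) * s + (P:ℤ) := by ring
            linarith [hkdecomp, hPs], le_refl 0, hPZ⟩
        refine ⟨r.toNat, s, by omega, ?_, ?_⟩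
        · rw [hV]
        · rw [hV]
          simp only [hdm.1, hdm.2]
          have h0 : ((0:ℤ).toNat) = 0 := rfl
          rw [h0, hVb0]
          have hiP : r.toNat + 1 = P := by omega
          rw [hiP, hVbP]
          push_cast
          ring
    obtain ⟨i, t, hiP, hVk, hVk1⟩ := key
    set c : ℂ := (t:ℂ) + (n:ℂ) * Complex.I with hc
    have hu2 : c + (u - c) ∈ segment ℝ (c + Vb i) (c + Vb (i+1)) := by
      have e1 : c + (u - c) = u := by ring
      have e2 : c + Vb i = V k + (n:ℂ) * Complex.I := by rw [hVk, hc]; ring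
      have e3 : c + Vb (i+1) = V (k+1) + (n:ℂ) * Complex.I := by rw [hVk1, hc]; ring
      rw [e1, e2, e3]
      exact hu
    have hu3 : u - c ∈ segment ℝ (Vb i) (Vb (i+1)) := (mem_segment_translate ℝ c).mp hu2
    have hw1 : u - c ∈ W := hseg i hiP hu3
    have hw2 : (u - c) + (t:ℂ) ∈ W := by
      rw [← hWtransR t]
      exact ⟨u - c, hw1, rfl⟩
    have hw3 : ((u - c) + (t:ℂ)) + (n:ℂ) * Complex.I ∈ W := by
      rw [← hWtrans n]
      exact ⟨(u - c) + (t:ℂ), hw2, rfl⟩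
    have e4 : ((u - c) + (t:ℂ)) + (n:ℂ) * Complex.I = u := by rw [hc]; ring
    rwa [e4] at hw3
  -- vertical bounds for the net
  have hVim : ∀ k : ℤ, m ≤ (V k).im ∧ (V k).im ≤ M := by
    intro k
    have h1 : (V k).im = (Vb ((k % (P:ℤ)).toNat)).im := by
      rw [hV]
      simp
    have h2 : (k % (P:ℤ)).toNat ≤ P := by
      have := hmodmem k
      omega
    rw [h1]
    exact ⟨hmle _ h2, hMge _ h2⟩
  -- choose the height of the translated net
  set n : ℤ := ⌊b.im - m⌋ + 1 with hn
  have hn1 : b.im < m + (n:ℝ) := by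
    have := Int.lt_floor_add_one (b.im - m)
    push_cast [hn]
    linarith
  have hn2 : M + (n:ℝ) < a.im := by
    have := Int.floor_le (b.im - m)
    push_cast [hn]
    linarith
  -- apply the blocking lemma to the translated net
  refine blocking (fun k => V k + (n:ℂ) * Complex.I) (P:ℤ) (by exact_mod_cast hP1) ?_
    (m + n) (M + n) ?_ K hK ?_ ha hb hn2 hn1
  · intro k
    show V (k + (P:ℤ)) + (n:ℂ) * Complex.I = (V k + (n:ℂ) * Complex.I) + 1
    rw [hper k]
    ring
  · intro k
    have him : (V k + (n:ℂ) * Complex.I).im = (V k).im + (n:ℝ) := by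
      simp
    rw [him]
    exact ⟨by linarith [(hVim k).1], by linarith [(hVim k).2]⟩
  · intro y hy k hmem
    exact hdisj y hy (hsegnet k n y hmem)

end BlockNet

end AuxiliaryWindingArgument

/-- The claim from part 2 of the proof of Sub-lemma 5.14: if `U₀ ⊆ ℝ²` is nonempty, open,
connected and `ℤ²`-periodic, then every connected component of the complement `ℝ² \ U₀`
is bounded. -/
theorem complement_components_bounded (U₀ : Set (EuclideanSpace ℝ (Fin 2)))
    (hopen : IsOpen U₀) (hconn : IsConnected U₀)
    (hper : ∀ z, IsLatticeVector z → setTranslate U₀ z = U₀) :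
    ∀ x ∈ U₀ᶜ, IsBounded (connectedComponentIn U₀ᶜ x) := by

  classical
  intro x hx
  set ψ : EuclideanSpace ℝ (Fin 2) ≃ₗᵢ[ℝ] ℂ := Complex.orthonormalBasisOneI.repr.symm with hψ
  have hψ_symm : ∀ z : ℂ, ψ.symm z = Complex.orthonormalBasisOneI.repr z := fun z => rfl
  set W : Set ℂ := ψ '' U₀ with hW
  have hψcont : Continuous ψ := ψ.continuous
  have hWopen : IsOpen W := ψ.toHomeomorph.isOpenMap U₀ hopen
  have hWconn : IsConnected W := hconn.image ψ hψcont.continuousOn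
  -- lattice translations of W
  have hlat : ∀ m' n' : ℤ, IsLatticeVector (ψ.symm ((m' : ℂ) + (n' : ℂ) * Complex.I)) := by
    intro m' n' i
    rw [hψ_symm, Complex.orthonormalBasisOneI_repr_apply]
    fin_cases i
    · exact ⟨m', by simp⟩
    · exact ⟨n', by simp⟩
  have key : ∀ m' n' : ℤ, (fun w => w + ((m' : ℂ) + (n' : ℂ) * Complex.I)) '' W = W := by
    intro m' n'
    set c : ℂ := (m' : ℂ) + (n' : ℂ) * Complex.I with hc
    set z : EuclideanSpace ℝ (Fin 2) := ψ.symm c with hz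
    have hz' : ψ z = c := ψ.apply_symm_apply c
    have htr : setTranslate U₀ z = U₀ := hper z (hlat m' n')
    calc (fun w => w + c) '' W = ψ '' ((fun u => u + z) '' U₀) := by
          rw [hW, Set.image_image, Set.image_image]
          apply Set.image_congr
          intro u _
          rw [map_add, hz']
      _ = ψ '' (setTranslate U₀ z) := by rw [setTranslate]
      _ = W := by rw [htr]
  have hWtransI : ∀ n : ℤ, (fun w => w + (n : ℂ) * Complex.I) '' W = W := by
    intro n
    have h := key 0 n
    have e : ((0 : ℤ) : ℂ) + (n : ℂ) * Complex.I = (n : ℂ) * Complex.I := by push_cast; ring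
    rwa [e] at h
  have hWtransR : ∀ n : ℤ, (fun w => w + (n : ℂ)) '' W = W := by
    intro n
    have h := key n 0
    have e : ((n : ℤ) : ℂ) + ((0 : ℤ) : ℂ) * Complex.I = (n : ℂ) := by push_cast; ring
    rwa [e] at h
  -- a path from p to p + 1 and from p to p + I inside W
  obtain ⟨p, hp⟩ := hWconn.nonempty
  have hWpc : IsPathConnected W := hWopen.isConnected_iff_isPathConnected.mp hWconn
  have hp1 : p + 1 ∈ W := by
    rw [← hWtransR 1]
    exact ⟨p, hp, by push_cast; ring⟩
  have hpI : p + Complex.I ∈ W := by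
    rw [← hWtransI 1]
    exact ⟨p, hp, by push_cast; ring⟩
  have hjoin1 : JoinedIn W p (p + 1) := hWpc.joinedIn p hp (p + 1) hp1
  have hjoinI : JoinedIn W p (p + Complex.I) := hWpc.joinedIn p hp (p + Complex.I) hpI
  -- the component, moved to ℂ
  set K : Set (EuclideanSpace ℝ (Fin 2)) := connectedComponentIn U₀ᶜ x with hK
  set K' : Set ℂ := ψ '' K with hK'
  have hK'pre : IsPreconnected K' :=
    (isPreconnected_connectedComponentIn).image ψ hψcont.continuousOn
  have hK'disj : ∀ y ∈ K', y ∉ W := by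
    rintro - ⟨u, hu, rfl⟩ ⟨v, hv, hev⟩
    have huv : u = v := ψ.injective hev.symm
    exact (connectedComponentIn_subset U₀ᶜ x hu) (huv ▸ hv)
  -- horizontal extent bound
  obtain ⟨D₁, hD₁⟩ := BlockNet.extent hWopen hjoin1.somePath hjoin1.somePath_mem
    hWtransI hWtransR hK'pre hK'disj
  -- the swap transformation
  set T : ℂ → ℂ := fun z => Complex.I * (starRingEnd ℂ) z with hT
  have hTcont : Continuous T := continuous_const.mul Complex.continuous_conj
  have hTinvol : ∀ z, T (T z) = z := by
    intro z
    rw [hT]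
    simp only [map_mul, Complex.conj_conj, Complex.conj_I]
    ring_nf
    rw [Complex.I_sq]
    ring
  have hTim : ∀ z, (T z).im = z.re := by
    intro z
    rw [hT]
    simp [Complex.mul_im]
  have hTadd : ∀ z w, T (z + w) = T z + T w := by
    intro z w
    rw [hT]
    simp only [map_add]
    ring
  have hTinj : Function.Injective T := by
    intro u v huv
    have := congrArg T huv
    rwa [hTinvol, hTinvol] at this
  set Thom : Homeomorph ℂ ℂ := ⟨⟨T, T, hTinvol, hTinvol⟩, hTcont, hTcont⟩ with hThom
  set W₂ : Set ℂ := T '' W with hW₂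
  have hW₂open : IsOpen W₂ := Thom.isOpenMap W hWopen
  have hTI : T Complex.I = 1 := by rw [hT]; simp [Complex.conj_I]
  have hTint : ∀ n : ℤ, T ((n:ℂ)) = (n:ℂ) * Complex.I := by
    intro n
    show Complex.I * (starRingEnd ℂ) ((n:ℂ)) = (n:ℂ) * Complex.I
    rw [map_intCast]
    ring
  have hTintI : ∀ n : ℤ, T ((n:ℂ) * Complex.I) = (n:ℂ) := by
    intro n
    show Complex.I * (starRingEnd ℂ) ((n:ℂ) * Complex.I) = (n:ℂ)
    rw [map_mul, map_intCast, Complex.conj_I]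
    ring_nf
    rw [Complex.I_sq]
    ring
  have hW₂transI : ∀ n : ℤ, (fun w => w + (n : ℂ) * Complex.I) '' W₂ = W₂ := by
    intro n
    have e : ∀ w, T w + (n:ℂ) * Complex.I = T (w + (n:ℂ)) := by
      intro w
      rw [hTadd, hTint]
    calc (fun w => w + (n : ℂ) * Complex.I) '' W₂
        = (fun w => T w + (n:ℂ) * Complex.I) '' W := by
          rw [hW₂]
          exact Set.image_image _ T W
      _ = (fun w => T (w + (n:ℂ))) '' W := Set.image_congr (fun w _ => e w)
      _ = T '' ((fun w => w + (n:ℂ)) '' W) := (Set.image_image T _ W).symm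
      _ = T '' W := by rw [hWtransR n]
      _ = W₂ := hW₂.symm
  have hW₂transR : ∀ n : ℤ, (fun w => w + (n : ℂ)) '' W₂ = W₂ := by
    intro n
    have e : ∀ w, T w + (n:ℂ) = T (w + (n:ℂ) * Complex.I) := by
      intro w
      rw [hTadd, hTintI]
    calc (fun w => w + (n : ℂ)) '' W₂
        = (fun w => T w + (n:ℂ)) '' W := by
          rw [hW₂]
          exact Set.image_image _ T W
      _ = (fun w => T (w + (n:ℂ) * Complex.I)) '' W := Set.image_congr (fun w _ => e w)
      _ = T '' ((fun w => w + (n:ℂ) * Complex.I) '' W) := (Set.image_image T _ W).symm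
      _ = T '' W := by rw [hWtransI n]
      _ = W₂ := hW₂.symm
  -- path in W₂
  have hTpI : T (p + Complex.I) = T p + 1 := by rw [hTadd, hTI]
  set σ' : Path (T p) (T (p + Complex.I)) := hjoinI.somePath.map hTcont with hσ'
  set σ₂ : Path (T p) (T p + 1) := σ'.cast rfl hTpI.symm with hσ₂
  have hσ₂mem : ∀ t, σ₂ t ∈ W₂ := by
    intro t
    have : σ₂ t = T (hjoinI.somePath t) := rfl
    rw [this]
    exact ⟨_, hjoinI.somePath_mem t, rfl⟩
  set K₂ : Set ℂ := T '' K' with hK₂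
  have hK₂pre : IsPreconnected K₂ := hK'pre.image T hTcont.continuousOn
  have hK₂disj : ∀ y ∈ K₂, y ∉ W₂ := by
    rintro - ⟨u, hu, rfl⟩ ⟨v, hv, hev⟩
    exact hK'disj u hu ((hTinj hev.symm) ▸ hv)
  obtain ⟨D₂, hD₂⟩ := BlockNet.extent hW₂open σ₂ hσ₂mem hW₂transI hW₂transR hK₂pre hK₂disj
  -- conclude boundedness
  have hb₀ : ψ x ∈ K' := ⟨x, mem_connectedComponentIn hx, rfl⟩
  have hsubball : K' ⊆ Metric.closedBall (ψ x) (D₂ + D₁) := by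
    intro a' ha'
    have h1 : a'.im - (ψ x).im ≤ D₁ := hD₁ a' ha' (ψ x) hb₀
    have h2 : (ψ x).im - a'.im ≤ D₁ := hD₁ (ψ x) hb₀ a' ha'
    have hTa : T a' ∈ K₂ := ⟨a', ha', rfl⟩
    have hTb : T (ψ x) ∈ K₂ := ⟨ψ x, hb₀, rfl⟩
    have h3 : a'.re - (ψ x).re ≤ D₂ := by
      have := hD₂ (T a') hTa (T (ψ x)) hTb
      rwa [hTim, hTim] at this
    have h4 : (ψ x).re - a'.re ≤ D₂ := by
      have := hD₂ (T (ψ x)) hTb (T a') hTa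
      rwa [hTim, hTim] at this
    rw [Metric.mem_closedBall, Complex.dist_eq]
    calc ‖a' - ψ x‖ ≤ |(a' - ψ x).re| + |(a' - ψ x).im| :=
          Complex.norm_le_abs_re_add_abs_im _
      _ ≤ D₂ + D₁ := by
          rw [Complex.sub_re, Complex.sub_im]
          have e1 : |a'.re - (ψ x).re| ≤ D₂ := abs_le.mpr ⟨by linarith, h3⟩
          have e2 : |a'.im - (ψ x).im| ≤ D₁ := abs_le.mpr ⟨by linarith, h1⟩
          exact add_le_add e1 e2
  have hK'bdd : IsBounded K' := Metric.isBounded_closedBall.subset hsubball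
  have hKK : K = ψ.symm '' K' := by
    rw [hK', Set.image_image]
    have : ∀ u, ψ.symm (ψ u) = u := ψ.symm_apply_apply
    simp [this]
  show IsBounded K
  rw [hKK]
  exact (ψ.symm.isometry.lipschitz).isBounded_image hK'bdd
end

section
/- Let N ≥ 2, let m₁, …, m_N be positive real numbers (masses), and let v₁, …, v_N and w₁, …, w_N be vectors in ℝ² satisfying the normalizations Σᵢ mᵢ vᵢ = 0, Σᵢ mᵢ ‖vᵢ‖² = 1, and Σᵢ mᵢ wᵢ = 0. Assume that the N-tuple (w₁, …, w_N) is not a scalar multiple of the N-tuple (v₁, …, v_N), and that for every pair of indices 1 ≤ i < j ≤ N the two vectors vᵢ − vⱼ and wᵢ − wⱼ are linearly dependent (span a subspace of dimension at most 1). Then all the vectors v₁, …, v_N are parallel to one another; that is, the linear span of {v₁, …, v_N} in ℝ² has dimension exactly 1. -/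
open Submodule Module

private lemma aux_dep {E : Type*} [NormedAddCommGroup E] [NormedSpace ℝ E]
    {a b : E} (ha : a ≠ 0)
    (h : finrank ℝ (span ℝ ({a, b} : Set E)) ≤ 1) :
    ∃ c : ℝ, b = c • a := by
  have hfin : FiniteDimensional ℝ (span ℝ ({a, b} : Set E)) :=
    FiniteDimensional.span_of_finite ℝ (Set.toFinite _)
  have h1 : span ℝ ({a} : Set E) ≤ span ℝ ({a, b} : Set E) :=
    span_mono (by simp)
  have h2 : finrank ℝ (span ℝ ({a} : Set E)) = 1 := finrank_span_singleton ha
  have heq : span ℝ ({a} : Set E) = span ℝ ({a, b} : Set E) :=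
    eq_of_le_of_finrank_le h1 (by rw [h2]; exact h)
  have hb : b ∈ span ℝ ({a} : Set E) := heq ▸ subset_span (by simp)
  obtain ⟨c, hc⟩ := Submodule.mem_span_singleton.mp hb
  exact ⟨c, hc.symm⟩

private lemma aux_pair {E : Type*} [NormedAddCommGroup E] [NormedSpace ℝ E]
    {x y : E} (hx : x ≠ 0) (h : ¬ LinearIndependent ℝ ![x, y]) :
    ∃ c : ℝ, y = c • x := by
  rw [LinearIndependent.pair_iff] at h
  push_neg at h
  obtain ⟨s, t, hst, hne⟩ := h
  have ht : t ≠ 0 := by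
    rintro rfl
    apply hne ?_ rfl
    simpa [hx] using hst
  refine ⟨-s / t, ?_⟩
  have h1 : t • y = (-s) • x := by
    rw [neg_smul, eq_neg_iff_add_eq_zero, add_comm]; exact hst
  have := congrArg (fun z => t⁻¹ • z) h1
  simpa [smul_smul, inv_mul_cancel₀ ht, div_eq_inv_mul] using this

private lemma aux_two {E : Type*} [NormedAddCommGroup E] [NormedSpace ℝ E]
    {ι : Type*} {f : ι → E}
    (h : 2 ≤ finrank ℝ (span ℝ (Set.range f))) :
    ∃ a b, LinearIndependent ℝ ![f a, f b] := by
  by_contra hcon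
  push_neg at hcon
  by_cases hz : ∀ k, f k = 0
  · have hsub : Set.range f ⊆ {0} := by rintro _ ⟨k, rfl⟩; simp [hz k]
    have hle : span ℝ (Set.range f) ≤ ⊥ := by
      rw [← span_zero_singleton (R := ℝ) (M := E)]
      exact span_mono hsub
    have h0 : finrank ℝ (span ℝ (Set.range f)) = 0 := by
      rw [le_bot_iff] at hle
      rw [hle]; simp
    omega
  · push_neg at hz
    obtain ⟨a, ha⟩ := hz
    have hle : span ℝ (Set.range f) ≤ span ℝ ({f a} : Set E) := by
      rw [span_le]
      rintro _ ⟨k, rfl⟩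
      obtain ⟨c, hc⟩ := aux_pair ha (hcon a k)
      rw [hc]
      exact smul_mem _ _ (subset_span rfl)
    have hone : finrank ℝ (span ℝ (Set.range f)) ≤ 1 := by
      calc finrank ℝ (span ℝ (Set.range f)) ≤ finrank ℝ (span ℝ ({f a} : Set E)) := by
            have : FiniteDimensional ℝ (span ℝ ({f a} : Set E)) :=
              FiniteDimensional.span_of_finite ℝ (Set.toFinite _)
            exact Submodule.finrank_mono hle
        _ = 1 := finrank_span_singleton ha
    omega

/-- Sub-lemmas 5.6 and 5.7: given masses `m₁, …, m_N > 0` and vectors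
`v₁, …, v_N, w₁, …, w_N ∈ ℝ²` with `∑ mᵢ vᵢ = 0`, `∑ mᵢ ‖vᵢ‖² = 1`, `∑ mᵢ wᵢ = 0`,
such that `(w₁, …, w_N)` is not a scalar multiple of `(v₁, …, v_N)` and for every pair
`i < j` the vectors `vᵢ - vⱼ` and `wᵢ - wⱼ` span a subspace of dimension at most 1,
all the velocities `v₁, …, v_N` are parallel: their span has dimension exactly 1. -/
theorem sublemma_5_7 (N : ℕ) (hN : 2 ≤ N) (m : Fin N → ℝ) (hm : ∀ i, 0 < m i)
    (v w : Fin N → EuclideanSpace ℝ (Fin 2))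
    (hv : ∑ i, m i • v i = 0)
    (hnorm : ∑ i, m i * ‖v i‖ ^ 2 = 1)
    (hw : ∑ i, m i • w i = 0)
    (hns : ¬∃ α : ℝ, ∀ i, w i = α • v i)
    (hdep : ∀ i j : Fin N, i < j →
      Module.finrank ℝ (Submodule.span ℝ ({v i - v j, w i - w j} :
        Set (EuclideanSpace ℝ (Fin 2)))) ≤ 1) :
    Module.finrank ℝ (Submodule.span ℝ (Set.range v)) = 1 := by
  classical
  have hEfin : finrank ℝ (EuclideanSpace ℝ (Fin 2)) = 2 := by simp
  have hub : finrank ℝ (span ℝ (Set.range v)) ≤ 2 :=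
    (Submodule.finrank_le (span ℝ (Set.range v))).trans_eq hEfin
  -- at least one v i is nonzero
  have hvne : ∃ i, v i ≠ 0 := by
    by_contra h
    push_neg at h
    simp only [h, norm_zero] at hnorm
    simp at hnorm
  have hlb : 1 ≤ finrank ℝ (span ℝ (Set.range v)) := by
    obtain ⟨i, hi⟩ := hvne
    have hle : span ℝ ({v i} : Set (EuclideanSpace ℝ (Fin 2))) ≤ span ℝ (Set.range v) :=
      span_mono (by simp)
    calc 1 = finrank ℝ (span ℝ ({v i} : Set (EuclideanSpace ℝ (Fin 2)))) :=
          (finrank_span_singleton hi).symm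
      _ ≤ _ := Submodule.finrank_mono hle
  rcases eq_or_lt_of_le hlb with h1 | h2
  · exact h1.symm
  exfalso
  have hd2 : finrank ℝ (span ℝ (Set.range v)) = 2 := le_antisymm hub h2
  apply hns
  -- symmetric parallelism
  have h' : ∀ i j : Fin N, v i ≠ v j → ∃ α : ℝ, w i - w j = α • (v i - v j) := by
    intro i j hij
    rcases lt_trichotomy i j with h | h | h
    · exact aux_dep (sub_ne_zero_of_ne hij) (hdep i j h)
    · exact absurd (congrArg v h) hij
    · obtain ⟨α, hα⟩ := aux_dep (sub_ne_zero_of_ne (Ne.symm hij)) (hdep j i h)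
      refine ⟨α, ?_⟩
      rw [← neg_sub (w j) (w i), hα, ← smul_neg, neg_sub]
  set z : Fin N := ⟨0, by omega⟩ with hz
  have hMpos : 0 < ∑ i, m i := Finset.sum_pos (fun i _ => hm i) ⟨z, Finset.mem_univ z⟩
  have hMne : (∑ i, m i) ≠ 0 := hMpos.ne'
  have hMne' : -(∑ i, m i) ≠ 0 := neg_ne_zero.mpr hMne
  -- sum of mass-weighted differences
  have hsum : ∀ u : Fin N → EuclideanSpace ℝ (Fin 2), (∑ i, m i • u i = 0) →
      ∑ k, m k • (u k - u z) = (-(∑ i, m i)) • u z := by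
    intro u hu
    rw [Finset.sum_congr rfl (fun k _ => smul_sub (m k) (u k) (u z)),
      Finset.sum_sub_distrib, hu, ← Finset.sum_smul, zero_sub, neg_smul]
  -- span of differences contains span of v
  have hvzmem : v z ∈ span ℝ (Set.range fun k => v k - v z) := by
    have hmem : ∑ k, m k • (v k - v z) ∈ span ℝ (Set.range fun k => v k - v z) :=
      Submodule.sum_smul_mem _ _ (fun k _ => subset_span ⟨k, rfl⟩)
    rw [hsum v hv] at hmem
    have h3 := Submodule.smul_mem _ (-(∑ i, m i))⁻¹ hmem
    rwa [smul_smul, inv_mul_cancel₀ hMne', one_smul] at h3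
  have hspan_le : span ℝ (Set.range v) ≤ span ℝ (Set.range fun k => v k - v z) := by
    rw [span_le]
    rintro _ ⟨k, rfl⟩
    have : v k = (v k - v z) + v z := by abel
    rw [this]
    exact add_mem (subset_span ⟨k, rfl⟩) hvzmem
  have hD2 : 2 ≤ finrank ℝ (span ℝ (Set.range fun k => v k - v z)) :=
    le_trans hd2.ge (Submodule.finrank_mono hspan_le)
  obtain ⟨a, b, hab⟩ := aux_two hD2
  have hpi := LinearIndependent.pair_iff.mp hab
  have hDa0 : v a - v z ≠ 0 := by
    have := hab.ne_zero 0
    simpa using this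
  have hDb0 : v b - v z ≠ 0 := by
    have := hab.ne_zero 1
    simpa using this
  have hvaz : v a ≠ v z := fun h => hDa0 (sub_eq_zero.mpr h)
  have hvbz : v b ≠ v z := fun h => hDb0 (sub_eq_zero.mpr h)
  obtain ⟨αa, hαa⟩ := h' a z hvaz
  obtain ⟨αb, hαb⟩ := h' b z hvbz
  -- v a ≠ v b
  have hvab : v a ≠ v b := by
    intro h
    have hkey : (1 : ℝ) • (v a - v z) + (-1 : ℝ) • (v b - v z) = 0 := by
      rw [h]; module
    exact one_ne_zero (hpi 1 (-1) hkey).1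
  -- αa = αb via the triangle a, b, z
  have hαab : αa = αb := by
    obtain ⟨γ, hγ⟩ := h' a b hvab
    have hkey : (αa - γ) • (v a - v z) + (γ - αb) • (v b - v z) = 0 := by
      linear_combination (norm := module) hαb + hγ - hαa
    obtain ⟨e1, e2⟩ := hpi _ _ hkey
    have : αa = γ := by linarith
    have : γ = αb := by linarith
    linarith
  -- main claim : all differences from z use the same scalar αa
  have hall : ∀ k, w k - w z = αa • (v k - v z) := by
    intro k
    by_cases hk : v k = v z
    · -- degenerate case: v k = v z, show w k = w z
      have hka : v k ≠ v a := by rw [hk]; exact fun h => hvaz h.symm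
      have hkb : v k ≠ v b := by rw [hk]; exact fun h => hvbz h.symm
      obtain ⟨γ1, hγ1⟩ := h' k a hka
      obtain ⟨γ2, hγ2⟩ := h' k b hkb
      rw [hk] at hγ1 hγ2
      -- w k - w z = (αa - γ1) • (v a - v z) and = (αb - γ2) • (v b - v z)
      have e1 : w k - w z = (αa - γ1) • (v a - v z) := by
        linear_combination (norm := module) hγ1 + hαa
      have e2 : w k - w z = (αb - γ2) • (v b - v z) := by
        linear_combination (norm := module) hγ2 + hαb
      have hkey : (αa - γ1) • (v a - v z) + (-(αb - γ2)) • (v b - v z) = 0 := by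
        linear_combination (norm := module) e2 - e1
      obtain ⟨f1, f2⟩ := hpi _ _ hkey
      rw [hk, sub_self, smul_zero]
      rw [e1, f1, zero_smul]
    · obtain ⟨αk, hαk⟩ := h' k z hk
      have hDk0 : v k - v z ≠ 0 := sub_ne_zero.mpr hk
      -- triangle lemma
      have tri : ∀ (p : Fin N) (αp : ℝ), w p - w z = αp • (v p - v z) →
          LinearIndependent ℝ ![v k - v z, v p - v z] → αk = αp := by
        intro p αp hαp hind
        have hkp : v k ≠ v p := by
          intro h
          have hkey : (1 : ℝ) • (v k - v z) + (-1 : ℝ) • (v p - v z) = 0 := by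
            rw [h]; module
          exact one_ne_zero (LinearIndependent.pair_iff.mp hind 1 (-1) hkey).1
        obtain ⟨γ, hγ⟩ := h' k p hkp
        have hkey : (αk - γ) • (v k - v z) + (γ - αp) • (v p - v z) = 0 := by
          linear_combination (norm := module) hαp + hγ - hαk
        obtain ⟨e1, e2⟩ := LinearIndependent.pair_iff.mp hind _ _ hkey
        linarith
      by_cases hka : LinearIndependent ℝ ![v k - v z, v a - v z]
      · rw [hαk, tri a αa hαa hka]
      · have hkb : LinearIndependent ℝ ![v k - v z, v b - v z] := by
          by_contra hkb
          obtain ⟨c, hc⟩ := aux_pair hDk0 hka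
          obtain ⟨c', hc'⟩ := aux_pair hDk0 hkb
          have hkey : c' • (v a - v z) + (-c) • (v b - v z) = 0 := by
            rw [hc, hc']; module
          have := (hpi _ _ hkey).2
          have hc0 : c = 0 := by linarith
          rw [hc0, zero_smul] at hc
          exact hDa0 hc
        rw [hαk, tri b αb hαb hkb, hαab]
  -- conclude: w z = αa • v z, hence w k = αa • v k for all k
  have hwz : w z = αa • v z := by
    have hs1 : ∑ k, m k • (w k - w z) = (-(∑ i, m i)) • w z := hsum w hw
    have hs2 : ∑ k, m k • (w k - w z) = αa • ((-(∑ i, m i)) • v z) := by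
      rw [Finset.sum_congr rfl (fun k _ => by rw [hall k])]
      rw [Finset.sum_congr rfl (fun k _ => smul_comm (m k) αa (v k - v z)),
        ← Finset.smul_sum, hsum v hv]
    rw [hs1] at hs2
    have h3 := congrArg (fun x => (-(∑ i, m i))⁻¹ • x) hs2
    simp only [smul_smul] at h3
    rw [inv_mul_cancel₀ hMne', one_smul] at h3
    rw [h3, mul_comm αa, ← mul_assoc, inv_mul_cancel₀ hMne', one_mul]
  refine ⟨αa, fun k => ?_⟩
  have hk := hall k
  linear_combination (norm := module) hk + hwz
end

section
/- Let l ∈ ℝ² be a nonzero vector, p ∈ ℝ², and r > 0. Assume that the straight line {p + t·l : t ∈ ℝ} stays at distance at least 2r from every point of the integer lattice, i.e., ‖p + t·l − z‖ ≥ 2r for all t ∈ ℝ and all z ∈ ℤ². Then l is parallel to some nonzero lattice vector: there exists l₀ ∈ ℤ², l₀ ≠ 0, such that l and l₀ are linearly dependent and ‖l₀‖ ≤ 1/(4r). -/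
/-- The conclusion of part 2° of the proof of Key Lemma 5.4: if the straight line
`{p + t·l : t ∈ ℝ}` stays at distance at least `2r` from every point of the integer
lattice `ℤ²`, then the direction `l` is parallel to a nonzero lattice vector `l₀` of
norm at most `1/(4r)`. -/
theorem line_avoiding_lattice_rational_direction
    (l p : EuclideanSpace ℝ (Fin 2)) (hl : l ≠ 0) (r : ℝ) (hr : 0 < r)
    (h : ∀ (t : ℝ) (z : EuclideanSpace ℝ (Fin 2)), IsLatticeVector z →
      2 * r ≤ ‖p + t • l - z‖) :
    ∃ l₀ : EuclideanSpace ℝ (Fin 2), IsLatticeVector l₀ ∧ l₀ ≠ 0 ∧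
      ¬LinearIndependent ℝ ![l, l₀] ∧ ‖l₀‖ ≤ 1 / (4 * r) := by
  set L : ℝ := (l 0) ^ 2 + (l 1) ^ 2 with hLdef
  have hLpos : 0 < L := by
    have hne : l 0 ≠ 0 ∨ l 1 ≠ 0 := by
      by_contra hc
      push_neg at hc
      apply hl
      ext i
      fin_cases i
      · simpa using hc.1
      · simpa using hc.2
    rcases hne with h0 | h1
    · positivity
    · positivity
  have hnorml : ‖l‖ = Real.sqrt L := by
    rw [EuclideanSpace.norm_eq]
    congr 1
    simp [Fin.sum_univ_two, hLdef, sq_abs, sq]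
  have hnormlpos : 0 < ‖l‖ := by rw [hnorml]; positivity
  set c : ℝ := p 1 * l 0 - p 0 * l 1 with hcdef
  set s : ℝ := 2 * r * ‖l‖ with hsdef
  have hspos : 0 < s := by positivity
  -- key: for any integers m n, |(n * l 0 - m * l 1) - c| ≥ s
  have key : ∀ m n : ℤ, s ≤ |((n : ℝ) * l 0 - (m : ℝ) * l 1) - c| := by
    intro m n
    set z : EuclideanSpace ℝ (Fin 2) := !₂[(m : ℝ), (n : ℝ)] with hz
    have hzlat : IsLatticeVector z := by
      intro i; fin_cases i
      · exact ⟨m, rfl⟩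
      · exact ⟨n, rfl⟩
    set t : ℝ := (((m : ℝ) - p 0) * l 0 + ((n : ℝ) - p 1) * l 1) / L with ht
    have h2 := h t z hzlat
    have hcoord : ∀ i, (p + t • l - z) i = p i + t * l i - z i := by
      intro i; rfl
    have hnormsq : ‖p + t • l - z‖ ^ 2 =
        (p 0 + t * l 0 - (m : ℝ)) ^ 2 + (p 1 + t * l 1 - (n : ℝ)) ^ 2 := by
      rw [← Real.sqrt_sq (norm_nonneg _), EuclideanSpace.norm_eq]
      rw [Real.sq_sqrt (by positivity)]
      simp only [Fin.sum_univ_two, hcoord, hz, sq, Real.norm_eq_abs, abs_mul_abs_self,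
        Matrix.cons_val_zero, Matrix.cons_val_one, Matrix.head_cons]
      refine Real.mul_self_sqrt ?_
      nlinarith [sq_nonneg (p 0 + t * l 0 - (m:ℝ)), sq_nonneg (p 1 + t * l 1 - (n:ℝ))]
    have hineq : (2 * r) ^ 2 ≤ ‖p + t • l - z‖ ^ 2 := by
      have := h2
      nlinarith [norm_nonneg (p + t • l - z)]
    rw [hnormsq] at hineq
    have hval : (p 0 + t * l 0 - (m : ℝ)) ^ 2 + (p 1 + t * l 1 - (n : ℝ)) ^ 2
        = (((n : ℝ) * l 0 - (m : ℝ) * l 1) - c) ^ 2 / L := by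
      rw [ht, hcdef, hLdef]
      field_simp [show (l 0) ^ 2 + (l 1) ^ 2 ≠ 0 from hLpos.ne']
      ring
    rw [hval] at hineq
    have habs : s ^ 2 ≤ (((n : ℝ) * l 0 - (m : ℝ) * l 1) - c) ^ 2 := by
      have : (2 * r) ^ 2 * L ≤ (((n : ℝ) * l 0 - (m : ℝ) * l 1) - c) ^ 2 :=
        (le_div_iff₀ hLpos).mp hineq
      calc s ^ 2 = (2 * r) ^ 2 * L := by
            rw [hsdef, hnorml]; rw [mul_pow, Real.sq_sqrt hLpos.le]
        _ ≤ _ := this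
    calc s = |s| := (abs_of_pos hspos).symm
      _ ≤ _ := by
          rw [← Real.sqrt_sq_eq_abs, ← Real.sqrt_sq_eq_abs]
          exact Real.sqrt_le_sqrt habs
  -- the subgroup generated by l 0 and l 1
  set G : AddSubgroup ℝ := AddSubgroup.closure {l 0, l 1} with hG
  have hGmem : ∀ g ∈ G, s ≤ |g - c| := by
    intro g hg
    rw [hG, AddSubgroup.mem_closure_pair] at hg
    obtain ⟨a, b, hab⟩ := hg
    have := key (-b) a
    simpa [← hab, zsmul_eq_mul, sub_eq_add_neg] using this
  rcases G.dense_or_cyclic with hd | ⟨a, ha⟩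
  · -- dense case: contradiction
    exfalso
    obtain ⟨g, hgG, hgball⟩ := hd.exists_mem_open Metric.isOpen_ball
      ⟨c, Metric.mem_ball_self hspos⟩
    have := hGmem g hgG
    rw [Metric.mem_ball, Real.dist_eq] at hgball
    linarith
  · -- cyclic case
    have hl0 : l 0 ∈ G := AddSubgroup.subset_closure (by simp)
    have hl1 : l 1 ∈ G := AddSubgroup.subset_closure (by simp)
    rw [ha, AddSubgroup.mem_closure_singleton] at hl0 hl1
    obtain ⟨n0, hn0⟩ := hl0
    obtain ⟨n1, hn1⟩ := hl1
    have hane : a ≠ 0 := by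
      rintro rfl
      apply hl
      ext i
      fin_cases i
      · simpa using hn0.symm
      · simpa using hn1.symm
    set l₀ : EuclideanSpace ℝ (Fin 2) := !₂[(n0 : ℝ), (n1 : ℝ)] with hl₀
    have hlat : IsLatticeVector l₀ := by
      intro i; fin_cases i
      · exact ⟨n0, rfl⟩
      · exact ⟨n1, rfl⟩
    have hsmul : l = a • l₀ := by
      ext i
      fin_cases i
      · show l 0 = a * l₀ 0
        simp [hl₀, ← hn0, zsmul_eq_mul]; ring
      · show l 1 = a * l₀ 1
        simp [hl₀, ← hn1, zsmul_eq_mul]; ring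
    have hl₀ne : l₀ ≠ 0 := by
      intro h0
      apply hl
      rw [hsmul, h0, smul_zero]
    have hnotind : ¬LinearIndependent ℝ ![l, l₀] := by
      intro hind
      rw [Fintype.linearIndependent_iff] at hind
      have := hind ![1, -a] (by
        simp [Fin.sum_univ_two, hsmul]) 0
      simpa using this
    -- norm bound
    have hround : |(round (c / a) : ℤ) * a - c| ≤ |a| / 2 := by
      have h1 : |(round (c / a) : ℝ) - c / a| ≤ 1 / 2 := by
        rw [abs_sub_comm]
        exact abs_sub_round (c / a)
      have : |(round (c / a) : ℝ) * a - c| = |(round (c / a) : ℝ) - c / a| * |a| := by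
        rw [← abs_mul]
        congr 1
        field_simp
      rw [this]
      calc |(round (c / a) : ℝ) - c / a| * |a| ≤ (1 / 2) * |a| := by
            apply mul_le_mul_of_nonneg_right h1 (abs_nonneg _)
        _ = |a| / 2 := by ring
    have hmemG : ((round (c / a) : ℤ) : ℝ) * a ∈ G := by
      rw [ha, AddSubgroup.mem_closure_singleton]
      exact ⟨round (c / a), by rw [zsmul_eq_mul]⟩
    have hsle : s ≤ |a| / 2 := le_trans (hGmem _ hmemG) hround
    have hnormeq : ‖l‖ = |a| * ‖l₀‖ := by
      rw [hsmul, norm_smul, Real.norm_eq_abs]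
    have hl₀pos : 0 < ‖l₀‖ := norm_pos_iff.mpr hl₀ne
    have hapos : 0 < |a| := abs_pos.mpr hane
    refine ⟨l₀, hlat, hl₀ne, hnotind, ?_⟩
    rw [le_div_iff₀ (by positivity)]
    have : 2 * r * (|a| * ‖l₀‖) ≤ |a| / 2 := by
      rw [hsdef, hnormeq] at hsle
      linarith
    nlinarith
end

section
/- Let E be a real inner product space, let P : E → E be the orthogonal projection onto a closed subspace of E, let δ₀ > 0, let t ≥ 0, and let δq, δv ∈ E be vectors satisfying the convexity condition ⟨δq, δv⟩ > 0 together with the cone conditions ‖P δq‖ < δ₀ ‖δq‖ and ‖P δv‖ < δ₀ ‖δv‖. Then ‖P(δq + t·δv)‖ < √2 · δ₀ · ‖δq + t·δv‖. -/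
open RealInnerProductSpace

/-- Proposition 8.24: let `P` be an orthogonal projection (idempotent and self-adjoint
linear map) of a real inner product space `E`, let `δ₀ > 0`, `t ≥ 0`, and let
`δq, δv ∈ E` satisfy the convexity condition `⟪δq, δv⟫ > 0` and the cone conditions
`‖P δq‖ < δ₀ ‖δq‖`, `‖P δv‖ < δ₀ ‖δv‖`. Then `‖P (δq + t δv)‖ < √2 δ₀ ‖δq + t δv‖`. -/
theorem prop_8_24 {E : Type*} [NormedAddCommGroup E] [InnerProductSpace ℝ E]
    (P : E →ₗ[ℝ] E) (hidem : P ∘ₗ P = P) (hsa : ∀ x y : E, ⟪P x, y⟫ = ⟪x, P y⟫)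
    (δ₀ : ℝ) (hδ₀ : 0 < δ₀) (t : ℝ) (ht : 0 ≤ t) (δq δv : E)
    (hconv : 0 < ⟪δq, δv⟫)
    (hq : ‖P δq‖ < δ₀ * ‖δq‖) (hv : ‖P δv‖ < δ₀ * ‖δv‖) :
    ‖P (δq + t • δv)‖ < Real.sqrt 2 * δ₀ * ‖δq + t • δv‖ := by
  have hq0 : δq ≠ 0 := fun h => by simp [h] at hconv
  have hnq : 0 < ‖δq‖ := norm_pos_iff.mpr hq0
  set s := ‖δq + t • δv‖ with hs
  have hkey : ‖δq‖ + t * ‖δv‖ ≤ Real.sqrt 2 * s := by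
    have hexp : s ^ 2 = ‖δq‖ ^ 2 + 2 * (t * ⟪δq, δv⟫) + (t * ‖δv‖) ^ 2 := by
      rw [hs, norm_add_sq_real, real_inner_smul_right, norm_smul,
        Real.norm_of_nonneg ht]
    have h1 : (‖δq‖ + t * ‖δv‖) ^ 2 ≤ 2 * s ^ 2 := by
      nlinarith [mul_nonneg ht hconv.le, sq_nonneg (‖δq‖ - t * ‖δv‖)]
    calc ‖δq‖ + t * ‖δv‖ = Real.sqrt ((‖δq‖ + t * ‖δv‖) ^ 2) :=
          (Real.sqrt_sq (by positivity)).symm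
      _ ≤ Real.sqrt (2 * s ^ 2) := Real.sqrt_le_sqrt h1
      _ = Real.sqrt 2 * s := by
          rw [Real.sqrt_mul (by norm_num), Real.sqrt_sq (norm_nonneg _)]
  have hP : ‖P (δq + t • δv)‖ ≤ ‖P δq‖ + t * ‖P δv‖ := by
    rw [map_add, map_smul]
    refine (norm_add_le _ _).trans ?_
    rw [norm_smul, Real.norm_of_nonneg ht]
  have h2 : ‖P (δq + t • δv)‖ < δ₀ * (‖δq‖ + t * ‖δv‖) := by
    have h3 : t * ‖P δv‖ ≤ t * (δ₀ * ‖δv‖) :=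
      mul_le_mul_of_nonneg_left hv.le ht
    nlinarith
  calc ‖P (δq + t • δv)‖ < δ₀ * (‖δq‖ + t * ‖δv‖) := h2
    _ ≤ δ₀ * (Real.sqrt 2 * s) := by
        exact mul_le_mul_of_nonneg_left hkey hδ₀.le
    _ = Real.sqrt 2 * δ₀ * s := by ring
end

section
/- Let E be a real inner product space, c > 0, and let q : ℝ → E be a differentiable curve such that for all t ≥ 0 the differential inequality ⟨q(t), q′(t)⟩ ≥ (c / (1 + c·t)) · ‖q(t)‖² holds. Then for all t ≥ 0 one has the expansion estimate ‖q(t)‖ ≥ (1 + c·t) · ‖q(0)‖. -/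
open RealInnerProductSpace

/-- The Gronwall-type expansion estimate (8.14)–(8.16): if a differentiable curve
`q : ℝ → E` in a real inner product space satisfies
`⟪q(t), q′(t)⟫ ≥ (c/(1+ct)) ‖q(t)‖²` for all `t ≥ 0`, then
`‖q(t)‖ ≥ (1 + ct) ‖q(0)‖` for all `t ≥ 0`. -/
theorem expansion_estimate {E : Type*} [NormedAddCommGroup E] [InnerProductSpace ℝ E]
    (c : ℝ) (hc : 0 < c) (q : ℝ → E) (hq : Differentiable ℝ q)
    (h : ∀ t : ℝ, 0 ≤ t → (c / (1 + c * t)) * ‖q t‖ ^ 2 ≤ ⟪q t, deriv q t⟫) :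
    ∀ t : ℝ, 0 ≤ t → (1 + c * t) * ‖q 0‖ ≤ ‖q t‖ := by
  set g : ℝ → ℝ := fun t => ⟪q t, q t⟫ / (1 + c * t) ^ 2 with hg
  have hpos : ∀ t : ℝ, 0 ≤ t → 0 < 1 + c * t := fun t ht => by positivity
  have hder : ∀ t : ℝ, 0 < t → HasDerivAt g
      ((( ⟪q t, deriv q t⟫ + ⟪deriv q t, q t⟫) * (1 + c * t) ^ 2
        - ⟪q t, q t⟫ * (2 * (1 + c * t) ^ 1 * c)) / ((1 + c * t) ^ 2) ^ 2) t := by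
    intro t ht
    have h1 : HasDerivAt (fun t => ⟪q t, q t⟫)
        (⟪q t, deriv q t⟫ + ⟪deriv q t, q t⟫) t :=
      (hq t).hasDerivAt.inner ℝ (hq t).hasDerivAt
    have h2 : HasDerivAt (fun t => (1 + c * t) ^ 2) (2 * (1 + c * t) ^ 1 * c) t := by
      have := ((hasDerivAt_const t (1:ℝ)).add ((hasDerivAt_id t).const_mul c)).pow 2
      exact this.congr_deriv (by simp)
    exact h1.div h2 (by positivity)
  have hmono : MonotoneOn g (Set.Ici 0) := by
    apply monotoneOn_of_deriv_nonneg (convex_Ici 0)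
    · apply ContinuousOn.div
      · exact ((hq.continuous).inner (hq.continuous)).continuousOn
      · fun_prop
      · intro t ht
        exact pow_ne_zero _ (hpos t ht).ne'
    · intro t ht
      rw [interior_Ici] at ht
      exact (hder t ht).differentiableAt.differentiableWithinAt
    · intro t ht
      rw [interior_Ici] at ht
      rw [(hder t ht).deriv]
      have h1 := h t ht.le
      have hp := hpos t ht.le
      apply div_nonneg _ (by positivity)
      have hs : ⟪q t, q t⟫ = ‖q t‖ ^ 2 := real_inner_self_eq_norm_sq (q t)
      have hsym : ⟪deriv q t, q t⟫ = ⟪q t, deriv q t⟫ := real_inner_comm _ _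
      rw [hs, hsym]
      have key : c / (1 + c * t) * ‖q t‖ ^ 2 * (1 + c * t) = c * ‖q t‖ ^ 2 := by
        field_simp
      nlinarith [sq_nonneg (1 + c * t), sq_nonneg (‖q t‖),
        mul_le_mul_of_nonneg_right h1 (sq_nonneg (1 + c * t))]
  intro t ht
  have := hmono (Set.self_mem_Ici) (Set.mem_Ici.mpr ht) ht
  simp only [hg] at this
  have hp := hpos t ht
  rw [real_inner_self_eq_norm_sq, real_inner_self_eq_norm_sq] at this
  simp only [mul_zero, add_zero, one_pow, div_one] at this
  have h2 : ((1 + c * t) * ‖q 0‖) ^ 2 ≤ ‖q t‖ ^ 2 := by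
    rw [mul_pow]
    calc (1 + c * t) ^ 2 * ‖q 0‖ ^ 2 ≤ (1 + c * t) ^ 2 * (‖q t‖ ^ 2 / (1 + c * t) ^ 2) :=
          mul_le_mul_of_nonneg_left this (by positivity)
      _ = ‖q t‖ ^ 2 := by field_simp
  exact (pow_le_pow_iff_left₀ (by positivity) (norm_nonneg _) two_ne_zero).mp h2
end
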